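/- arXiv:2503.23597 — 6 statements merged into one kernel-verified Lean document; each statement's English description precedes it below -/
import Mathlib

section
/- For integers k and l with l > k and 1 ≤ i ≤ m-1, the inverse Demazure-Lusztig operator satisfies T_i^{-1}(X_i^k X_{i+1}^l) = X_i^l X_{i+1}^k + (1 - t^{-1})·(X_i^{l-1} X_{i+1}^{k+1} + X_i^{l-2} X_{i+1}^{k+2} + ... + X_i^{k+1} X_{i+1}^{l-1}), and for l ≤ k, T_i^{-1}(X_i^k X_{i+1}^l) = t^{-1} X_i^l X_{i+1}^k − (1 − t^{-1})·(X_i^{l+1} X_{i+1}^{k-1} + ... + X_i^k X_{i+1}^l). -/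
open Finset

section aux
variable {K : Type*} [Field K] (a b : K)

lemma term_eq (ha : a ≠ 0) (hb : b ≠ 0) (p q : ℤ) :
    (1 - a * b⁻¹) * (a ^ p * b ^ q) = a ^ p * b ^ q - a ^ (p + 1) * b ^ (q - 1) := by
  rw [zpow_add_one₀ ha, zpow_sub_one₀ hb]; ring

lemma key1 (ha : a ≠ 0) (hb : b ≠ 0) {k l : ℤ} (h : k < l) :
    (1 - a * b⁻¹) * ∑ u ∈ Finset.range (l - k - 1).toNat,
        a ^ (l - 1 - (u : ℤ)) * b ^ (k + 1 + (u : ℤ))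
      = a ^ (k + 1) * b ^ (l - 1) - a ^ l * b ^ k := by
  rw [Finset.mul_sum]
  have step : ∀ u ∈ Finset.range (l - k - 1).toNat,
      (1 - a * b⁻¹) * (a ^ (l - 1 - (u : ℤ)) * b ^ (k + 1 + (u : ℤ)))
      = (fun v : ℕ => a ^ (l - (v : ℤ)) * b ^ (k + (v : ℤ))) (u + 1)
        - (fun v : ℕ => a ^ (l - (v : ℤ)) * b ^ (k + (v : ℤ))) u := by
    intro u _
    simp only
    rw [term_eq a b ha hb]
    have e1 : l - ((u : ℤ) + 1) = l - 1 - u := by ring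
    have e2 : k + ((u : ℤ) + 1) = k + 1 + u := by ring
    have e3 : (l - 1 - (u : ℤ)) + 1 = l - u := by ring
    have e4 : (k + 1 + (u : ℤ)) - 1 = k + u := by ring
    push_cast
    rw [e1, e2, e3, e4]
  rw [Finset.sum_congr rfl step,
    Finset.sum_range_sub (f := fun v : ℕ => a ^ (l - (v : ℤ)) * b ^ (k + (v : ℤ)))]
  have hN : ((l - k - 1).toNat : ℤ) = l - k - 1 := Int.toNat_of_nonneg (by omega)
  simp only [hN, Nat.cast_zero]
  rw [show l - (l - k - 1) = k + 1 by ring, show k + (l - k - 1) = l - 1 by ring,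
    show l - (0:ℤ) = l by ring, show k + (0:ℤ) = k by ring]

lemma key2 (ha : a ≠ 0) (hb : b ≠ 0) {k l : ℤ} (h : l ≤ k) :
    (1 - a * b⁻¹) * (a ^ l * b ^ k + ∑ u ∈ Finset.range (k - l).toNat,
        a ^ (l + 1 + (u : ℤ)) * b ^ (k - 1 - (u : ℤ)))
      = a ^ l * b ^ k - a ^ (k + 1) * b ^ (l - 1) := by
  rw [mul_add, Finset.mul_sum]
  have step : ∀ u ∈ Finset.range (k - l).toNat,
      (1 - a * b⁻¹) * (a ^ (l + 1 + (u : ℤ)) * b ^ (k - 1 - (u : ℤ)))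
      = (fun v : ℕ => a ^ (l + 1 + (v : ℤ)) * b ^ (k - 1 - (v : ℤ))) u
        - (fun v : ℕ => a ^ (l + 1 + (v : ℤ)) * b ^ (k - 1 - (v : ℤ))) (u + 1) := by
    intro u _
    simp only
    rw [term_eq a b ha hb]
    have e1 : l + 1 + ((u : ℤ) + 1) = (l + 1 + u) + 1 := by ring
    have e2 : k - 1 - ((u : ℤ) + 1) = (k - 1 - u) - 1 := by ring
    push_cast
    rw [e1, e2]
  rw [Finset.sum_congr rfl step]
  have tele : ∀ (f : ℕ → K) (n : ℕ), ∑ u ∈ Finset.range n, (f u - f (u + 1)) = f 0 - f n := by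
    intro f n
    have := Finset.sum_range_sub (fun v => f v) n
    have h2 : ∑ u ∈ Finset.range n, (f u - f (u + 1))
        = - ∑ u ∈ Finset.range n, (f (u + 1) - f u) := by
      rw [← Finset.sum_neg_distrib]
      exact Finset.sum_congr rfl (fun u _ => by ring)
    rw [h2, this]; ring
  rw [tele]
  have hN : ((k - l).toNat : ℤ) = k - l := Int.toNat_of_nonneg (by omega)
  simp only [hN, Nat.cast_zero]
  rw [term_eq a b ha hb,
    show l + 1 + (k - l) = k + 1 by ring, show k - 1 - (k - l) = l - 1 by ring,
    show l + 1 + (0:ℤ) = l + 1 by ring, show k - 1 - (0:ℤ) = k - 1 by ring]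
  ring

end aux

open MvPolynomial

/-- The ring `ℚ(t)[X₁,…,X_m]`. -/
abbrev S0 (m : ℕ) := MvPolynomial (Fin m) (RatFunc ℚ)

/-- The field `ℚ(t)(X₁,…,X_m)` in which `ℚ(t)[X^{±1}]` embeds. -/
abbrev L0 (m : ℕ) := FractionRing (S0 m)

noncomputable def emb0 (m : ℕ) : S0 m →+* L0 m := algebraMap (S0 m) (L0 m)

noncomputable def t0 (m : ℕ) : L0 m := emb0 m (C RatFunc.X)

noncomputable def Xv0 (m : ℕ) (a : Fin m) : L0 m := emb0 m (X a)

set_option maxHeartbeats 1000000 in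
/-- the two explicit formulas for
`T_i⁻¹(X_i^k X_{i+1}^l)`, in the cases `l > k` and `l ≤ k`, where
`T_i⁻¹(F) = s_i(F) + (1 - t⁻¹)(X_i X_{i+1}⁻¹ F - s_i F)/(1 - X_i X_{i+1}⁻¹)`. -/
theorem stmt_1 (m : ℕ) (i j : Fin m) (hij : (j : ℕ) = (i : ℕ) + 1)
    (s : L0 m ≃+* L0 m)
    (hs : ∀ p : S0 m, s (emb0 m p) = emb0 m (rename (Equiv.swap i j) p))
    (Tinv : L0 m → L0 m)
    (hTinv : ∀ F : L0 m, Tinv F = s F +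
      (1 - (t0 m)⁻¹) * (Xv0 m i * (Xv0 m j)⁻¹ * F - s F) /
        (1 - Xv0 m i * (Xv0 m j)⁻¹))
    (k l : ℤ) :
    (k < l →
      Tinv (Xv0 m i ^ k * Xv0 m j ^ l) =
        Xv0 m i ^ l * Xv0 m j ^ k +
          (1 - (t0 m)⁻¹) * ∑ u ∈ Finset.range (l - k - 1).toNat,
            Xv0 m i ^ (l - 1 - (u : ℤ)) * Xv0 m j ^ (k + 1 + (u : ℤ))) ∧
    (l ≤ k →
      Tinv (Xv0 m i ^ k * Xv0 m j ^ l) =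
        (t0 m)⁻¹ * (Xv0 m i ^ l * Xv0 m j ^ k) -
          (1 - (t0 m)⁻¹) * ∑ u ∈ Finset.range (k - l).toNat,
            Xv0 m i ^ (l + 1 + (u : ℤ)) * Xv0 m j ^ (k - 1 - (u : ℤ))) := by
  have hinj : Function.Injective (emb0 m) := IsFractionRing.injective (S0 m) (L0 m)
  set a := Xv0 m i with ha_def
  set b := Xv0 m j with hb_def
  have hne : i ≠ j := by
    intro h
    rw [h] at hij
    omega
  have ha : a ≠ 0 := by
    simp only [ha_def, Xv0]
    exact fun h => MvPolynomial.X_ne_zero i (hinj (by rw [h, map_zero]))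
  have hb : b ≠ 0 := by
    simp only [hb_def, Xv0]
    exact fun h => MvPolynomial.X_ne_zero j (hinj (by rw [h, map_zero]))
  have hab : a ≠ b := by
    intro h
    apply hne
    exact MvPolynomial.X_injective (hinj h)
  have hden : (1 : L0 m) - a * b⁻¹ ≠ 0 := by
    intro h
    apply hab
    have h1 : a * b⁻¹ = 1 := (sub_eq_zero.mp h).symm
    exact (mul_inv_eq_one₀ hb).mp h1
  have hsa : s a = b := by
    rw [ha_def, hb_def, Xv0, Xv0, hs (X i), rename_X, Equiv.swap_apply_left]
  have hsb : s b = a := by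
    rw [ha_def, hb_def, Xv0, Xv0, hs (X j), rename_X, Equiv.swap_apply_right]
  have hsab : s (a ^ k * b ^ l) = a ^ l * b ^ k := by
    rw [map_mul, map_zpow₀, map_zpow₀, hsa, hsb, mul_comm]
  have hmul : a * b⁻¹ * (a ^ k * b ^ l) = a ^ (k + 1) * b ^ (l - 1) := by
    rw [zpow_add_one₀ ha, zpow_sub_one₀ hb]; ring
  constructor
  · intro h
    have hS : (a * b⁻¹ * (a ^ k * b ^ l) - a ^ l * b ^ k) / (1 - a * b⁻¹)
        = ∑ u ∈ Finset.range (l - k - 1).toNat,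
            a ^ (l - 1 - (u : ℤ)) * b ^ (k + 1 + (u : ℤ)) := by
      rw [div_eq_iff hden, hmul, ← key1 a b ha hb h]; ring
    rw [hTinv, hsab, mul_div_assoc, hS]
  · intro h
    have hE : (a * b⁻¹ * (a ^ k * b ^ l) - a ^ l * b ^ k) / (1 - a * b⁻¹)
        = -(a ^ l * b ^ k + ∑ u ∈ Finset.range (k - l).toNat,
            a ^ (l + 1 + (u : ℤ)) * b ^ (k - 1 - (u : ℤ))) := by
      rw [div_eq_iff hden, hmul]
      linear_combination key2 a b ha hb h
    rw [hTinv, hsab, mul_div_assoc, hE]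
    ring
end

section
/- If F ∈ Q(q,t)[X_1,...,X_m] is a polynomial divisible by X_i, then for 1 ≤ i < m the polynomial T_i(F) is divisible by X_{i+1}, and for 1 < i ≤ m the polynomial T_{i-1}^{-1}(F) is divisible by X_{i-1}. -/
set_option maxHeartbeats 1000000
set_option synthInstance.maxHeartbeats 400000

open MvPolynomial

/-- The field `ℚ(q,t)`, realized as the fraction field of `ℚ[q,t]`. -/
abbrev K2 := FractionRing (MvPolynomial (Fin 2) ℚ)

/-- The parameter `q ∈ ℚ(q,t)`. -/
noncomputable def qq : K2 := algebraMap (MvPolynomial (Fin 2) ℚ) K2 (X 0)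

/-- The parameter `t ∈ ℚ(q,t)`. -/
noncomputable def tt : K2 := algebraMap (MvPolynomial (Fin 2) ℚ) K2 (X 1)

/-- The polynomial ring `ℚ(q,t)[X₁,…,X_m]`. -/
abbrev Sqt (m : ℕ) := MvPolynomial (Fin m) K2

/-- The field `ℚ(q,t)(X₁,…,X_m)` in which the Laurent polynomial ring
`ℚ(q,t)[X₁^{±1},…,X_m^{±1}]` naturally embeds. -/
abbrev Lqt (m : ℕ) := FractionRing (Sqt m)

noncomputable def emb (m : ℕ) : Sqt m →+* Lqt m := algebraMap (Sqt m) (Lqt m)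

noncomputable def qL (m : ℕ) : Lqt m := emb m (C qq)

noncomputable def tL (m : ℕ) : Lqt m := emb m (C tt)

noncomputable def Xv (m : ℕ) (a : Fin m) : Lqt m := emb m (X a)

/-- The `ℤ`-indexed variables `X_j`, subject to the level-one convention
`X_{i+km} = q^{-k} X_i`; for `1 ≤ j ≤ m` this is the variable `X_j`. -/
noncomputable def Xz (m : ℕ) (hm : 0 < m) (j : ℤ) : Lqt m :=
  qL m ^ (-((j - 1) / (m : ℤ))) *
    Xv m ⟨((j - 1) % (m : ℤ)).toNat, by
      have h0 : (0 : ℤ) < (m : ℤ) := by exact_mod_cast hm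
      have h1 : 0 ≤ (j - 1) % (m : ℤ) := Int.emod_nonneg _ (ne_of_gt h0)
      have h2 : (j - 1) % (m : ℤ) < (m : ℤ) := Int.emod_lt_of_pos _ h0
      omega⟩

/-!
Since `F - s_i F` vanishes on `X_i = X_{i+1}`, it is divisible by `X_{i+1} - X_i`, and dividing by
`1 - X_i X_{i+1}⁻¹ = (X_{i+1} - X_i) / X_{i+1}` leaves `X_{i+1}` times a polynomial. For `F = X_i G`
the term `t s_i F = t X_{i+1} s_i G` is divisible by `X_{i+1}` as well; for `F = X_{i+1} G` both
`s_i F` and `X_i X_{i+1}⁻¹ F - s_i F = X_i (G - s_i G)` carry a factor `X_i`.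
-/

theorem MvPolynomial.X_sub_X_dvd_sub_rename_swap {R σ : Type*} [CommRing R] [DecidableEq σ]
    (i j : σ) (p : MvPolynomial σ R) :
    X j - X i ∣ p - rename (Equiv.swap i j) p := by
  rw [← Ideal.mem_span_singleton, ← Ideal.Quotient.eq]
  set I := Ideal.span {(X j - X i : MvPolynomial σ R)}
  have hji : Ideal.Quotient.mk I (X j) = Ideal.Quotient.mk I (X i) :=
    Ideal.Quotient.eq.mpr (Ideal.mem_span_singleton_self _)
  have hmk : (Ideal.Quotient.mkₐ R I).comp (rename (Equiv.swap i j)) = Ideal.Quotient.mkₐ R I := by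
    ext k
    simp only [AlgHom.comp_apply, rename_X, Ideal.Quotient.mkₐ_eq_mk]
    rcases eq_or_ne k i with rfl | hki
    · rw [Equiv.swap_apply_left, hji]
    rcases eq_or_ne k j with rfl | hkj
    · rw [Equiv.swap_apply_right, hji]
    · rw [Equiv.swap_apply_of_ne_of_ne hki hkj]
  exact (DFunLike.congr_fun hmk p).symm

theorem mul_div_one_sub_mul_inv {L : Type*} [Field L] {x y : L} (hy : y ≠ 0) (hxy : x ≠ y)
    (a : L) : (y - x) * a / (1 - x * y⁻¹) = y * a := by
  rw [show 1 - x * y⁻¹ = (y - x) / y by field_simp]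
  field_simp [sub_ne_zero.mpr hxy.symm]

section DemazureLusztig

variable {K L σ : Type*} [Field L] [DecidableEq σ]

/-- `T_i`, with `s = s_i`, `x = X_i`, `y = X_{i+1}`. -/
def demazureLusztig (s : L → L) (x y t F : L) : L :=
  t * s F + (t - 1) * (F - s F) / (1 - x * y⁻¹)

/-- `T_i⁻¹`, with `s = s_i`, `x = X_i`, `y = X_{i+1}`. -/
def demazureLusztigInv (s : L → L) (x y t F : L) : L :=
  s F + (1 - t⁻¹) * (x * y⁻¹ * F - s F) / (1 - x * y⁻¹)

theorem exists_demazureLusztig_eq_of_X_dvd [CommRing K] [Nontrivial K]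
    (f : MvPolynomial σ K →+* L) (hf : Function.Injective f) {i j : σ} (hij : i ≠ j)
    {s : L → L} (hs : ∀ p, s (f p) = f (rename (Equiv.swap i j) p)) (c : K)
    {p : MvPolynomial σ K} (hp : X i ∣ p) :
    ∃ p' : MvPolynomial σ K,
      demazureLusztig s (f (X i)) (f (X j)) (f (C c)) (f p) = f p' ∧ X j ∣ p' := by
  obtain ⟨g, rfl⟩ := hp
  obtain ⟨h, hh⟩ := X_sub_X_dvd_sub_rename_swap i j (X i * g)
  have hy : f (X j) ≠ 0 := (map_ne_zero_iff f hf).mpr (X_ne_zero j)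
  have hxy : f (X i) ≠ f (X j) := hf.ne (X_injective.ne hij)
  have hdiff : f (X i * g) - s (f (X i * g)) = (f (X j) - f (X i)) * f h := by
    rw [hs, ← map_sub, hh, map_mul, map_sub]
  refine ⟨X j * (C c * rename (Equiv.swap i j) g + (C c - 1) * h), ?_, dvd_mul_right _ _⟩
  rw [demazureLusztig, hdiff, mul_div_assoc, mul_div_one_sub_mul_inv hy hxy, hs,
    map_mul (rename _), rename_X, Equiv.swap_apply_left]
  simp only [map_mul, map_add, map_sub, map_one]
  ring

theorem exists_demazureLusztigInv_eq_of_X_dvd [Field K]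
    (f : MvPolynomial σ K →+* L) (hf : Function.Injective f) {i j : σ} (hij : i ≠ j)
    {s : L → L} (hs : ∀ p, s (f p) = f (rename (Equiv.swap i j) p)) (c : K)
    {p : MvPolynomial σ K} (hp : X j ∣ p) :
    ∃ p' : MvPolynomial σ K,
      demazureLusztigInv s (f (X i)) (f (X j)) (f (C c)) (f p) = f p' ∧ X i ∣ p' := by
  obtain ⟨g, rfl⟩ := hp
  obtain ⟨h, hh⟩ := X_sub_X_dvd_sub_rename_swap i j g
  have hy : f (X j) ≠ 0 := (map_ne_zero_iff f hf).mpr (X_ne_zero j)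
  have hxy : f (X i) ≠ f (X j) := hf.ne (X_injective.ne hij)
  have hdiff : f (X i) * (f (X j))⁻¹ * f (X j * g) - s (f (X j * g))
      = (f (X j) - f (X i)) * (f (X i) * f h) := by
    rw [hs, map_mul (rename _), rename_X, Equiv.swap_apply_right, map_mul, map_mul,
      mul_assoc, inv_mul_cancel_left₀ hy, ← mul_sub, ← map_sub, hh, map_mul, map_sub]
    ring
  refine ⟨X i * (rename (Equiv.swap i j) g + C (1 - c⁻¹) * (X j * h)), ?_, dvd_mul_right _ _⟩
  rw [demazureLusztigInv, hdiff, mul_div_assoc, mul_div_one_sub_mul_inv hy hxy, hs,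
    map_mul (rename _), rename_X, Equiv.swap_apply_right]
  simp only [map_mul, map_add, ← RingHom.comp_apply f C, map_sub, map_one, map_inv₀]
  ring

end DemazureLusztig

/-- if a polynomial `F ∈ ℚ(q,t)[X₁,…,X_m]` is divisible by `X_i`,
then `T_i(F)` is (a polynomial) divisible by `X_{i+1}`, and if it is divisible
by `X_{i+1}` then `T_i⁻¹(F)` is (a polynomial) divisible by `X_i`.  Here
`(i, j)` encodes the adjacent pair `(i, i+1)`. -/
theorem stmt_5 (m : ℕ) (i j : Fin m) (hij : (j : ℕ) = (i : ℕ) + 1)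
    (s : Lqt m ≃+* Lqt m)
    (hs : ∀ p : Sqt m, s (emb m p) = emb m (rename (Equiv.swap i j) p))
    (T Tinv : Lqt m → Lqt m)
    (hT : ∀ F : Lqt m, T F = tL m * s F +
      (tL m - 1) * (F - s F) / (1 - Xv m i * (Xv m j)⁻¹))
    (hTinv : ∀ F : Lqt m, Tinv F = s F +
      (1 - (tL m)⁻¹) * (Xv m i * (Xv m j)⁻¹ * F - s F) /
        (1 - Xv m i * (Xv m j)⁻¹)) :
    (∀ p : Sqt m, X i ∣ p → ∃ p' : Sqt m, T (emb m p) = emb m p' ∧ X j ∣ p') ∧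
    (∀ p : Sqt m, X j ∣ p → ∃ p' : Sqt m, Tinv (emb m p) = emb m p' ∧ X i ∣ p') := by
  have hne : i ≠ j := fun h => by simp [h] at hij
  have hemb : Function.Injective (emb m) := IsFractionRing.injective (Sqt m) (Lqt m)
  rw [show T = demazureLusztig s (Xv m i) (Xv m j) (tL m) from funext hT,
    show Tinv = demazureLusztigInv s (Xv m i) (Xv m j) (tL m) from funext hTinv]
  exact ⟨fun p => exists_demazureLusztig_eq_of_X_dvd (emb m) hemb hne hs tt,
    fun p => exists_demazureLusztigInv_eq_of_X_dvd (emb m) hemb hne hs tt⟩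
end

section
/- For 0 ≤ a < m and any r ≥ 0, the operator Ŝ_a = (1 + T_1^{-1} + T_2^{-1}T_1^{-1} + ... + T_a^{-1}···T_1^{-1})∘Π satisfies Ŝ_a(e_r(X_1,...,X_a)) = t^{-a}·[r+1]_t·e_{r+1}(X_1,...,X_{a+1}), where e_r denotes the elementary symmetric polynomial and [r+1]_t = 1 + t + ... + t^r. -/
set_option maxHeartbeats 1000000
set_option synthInstance.maxHeartbeats 400000

open MvPolynomial

/-- The elementary symmetric polynomial `e_r(X_a, …, X_b)` (equal to `0` for
`r < 0`, and to `δ_{r,0}` when the interval `[a,b]` is empty). -/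
noncomputable def esym (m : ℕ) (hm : 0 < m) (a b r : ℤ) : Lqt m :=
  if r < 0 then 0
  else ∑ I ∈ (Finset.Icc a b).powersetCard r.toNat, ∏ j ∈ I, Xz m hm j

/-- The `t`-integer `[n]_t = 1 + t + ⋯ + t^{n-1}`. -/
noncomputable def tint (m : ℕ) (n : ℕ) : Lqt m := ∑ j ∈ Finset.range n, tL m ^ j

/-- The `t`-factorial `[n]_t!`. -/
noncomputable def tfact (m : ℕ) (n : ℕ) : Lqt m :=
  ∏ j ∈ Finset.range n, tint m (j + 1)

namespace Stmt6Aux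


noncomputable def E (m : ℕ) (w : ℤ → Lqt m) (S : Finset ℤ) (k : ℤ) : Lqt m :=
  if k < 0 then 0 else ∑ I ∈ S.powersetCard k.toNat, ∏ j ∈ I, w j

lemma esym_eq_E (m : ℕ) (hm : 0 < m) (a b r : ℤ) :
    esym m hm a b r = E m (Xz m hm) (Finset.Icc a b) r := rfl

lemma E_neg {m : ℕ} (w : ℤ → Lqt m) (S : Finset ℤ) {k : ℤ} (hk : k < 0) :
    E m w S k = 0 := by simp [E, hk]

lemma E_zero {m : ℕ} (w : ℤ → Lqt m) (S : Finset ℤ) : E m w S 0 = 1 := by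
  simp [E]

lemma E_congr {m : ℕ} {w w' : ℤ → Lqt m} {S : Finset ℤ} (k : ℤ)
    (h : ∀ j ∈ S, w j = w' j) : E m w S k = E m w' S k := by
  unfold E
  split
  · rfl
  · refine Finset.sum_congr rfl fun I hI => Finset.prod_congr rfl fun j hj => ?_
    exact h j ((Finset.mem_powersetCard.mp hI).1 hj)

lemma E_hom {m : ℕ} (φ : Lqt m →+* Lqt m) (w : ℤ → Lqt m) (S : Finset ℤ) (k : ℤ) :
    φ (E m w S k) = E m (fun j => φ (w j)) S k := by
  unfold E
  split
  · simp
  · rw [map_sum]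
    exact Finset.sum_congr rfl fun I _ => by rw [map_prod]

lemma E_card_lt {m : ℕ} (w : ℤ → Lqt m) (S : Finset ℤ) {k : ℤ} (hk : (S.card : ℤ) < k) :
    E m w S k = 0 := by
  have hk0 : ¬ k < 0 := by omega
  have : S.powersetCard k.toNat = ∅ := by
    rw [Finset.powersetCard_eq_empty]
    omega
  simp [E, hk0, this]

lemma E_empty {m : ℕ} (w : ℤ → Lqt m) (k : ℤ) :
    E m w (∅ : Finset ℤ) k = if k = 0 then 1 else 0 := by
  rcases lt_trichotomy k 0 with h | h | h
  · rw [E_neg _ _ h]; simp [h.ne]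
  · subst h; simp [E_zero]
  · rw [E_card_lt _ _ (by simpa using h)]; simp [h.ne']

lemma E_insert {m : ℕ} (w : ℤ → Lqt m) {x : ℤ} {S : Finset ℤ} (hx : x ∉ S) (k : ℤ) :
    E m w (insert x S) k = E m w S k + w x * E m w S (k - 1) := by
  rcases lt_trichotomy k 0 with h | h | h
  · rw [E_neg _ _ h, E_neg _ _ h, E_neg _ _ (by omega)]; ring
  · subst h; rw [E_zero, E_zero, E_neg _ _ (by omega)]; ring
  · have hk : k.toNat = (k - 1).toNat + 1 := by omega
    have hk1 : ¬ k < 0 := by omega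
    have hk2 : ¬ k - 1 < 0 := by omega
    unfold E
    simp only [hk1, hk2, if_false, hk]
    rw [Finset.powersetCard_succ_insert hx, Finset.sum_union, Finset.sum_image]
    · congr 1
      rw [Finset.mul_sum]
      refine Finset.sum_congr rfl fun I hI => ?_
      rw [Finset.prod_insert fun hxI => hx ((Finset.mem_powersetCard.mp hI).1 hxI)]
    · intro I hI J hJ hIJ
      have hxI : x ∉ I := fun hxI => hx ((Finset.mem_powersetCard.mp hI).1 hxI)
      have hxJ : x ∉ J := fun hxJ => hx ((Finset.mem_powersetCard.mp hJ).1 hxJ)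
      have := congrArg (Finset.erase · x) hIJ
      simpa [Finset.erase_insert, hxI, hxJ] using this
    · rw [Finset.disjoint_right]
      intro I hI hI2
      obtain ⟨J, hJ, rfl⟩ := Finset.mem_image.mp hI
      have := (Finset.mem_powersetCard.mp hI2).1 (Finset.mem_insert_self x J)
      exact hx this

lemma E_map {m : ℕ} (w : ℤ → Lqt m) (a b c k : ℤ) :
    E m w (Finset.Icc (a + c) (b + c)) k = E m (fun i => w (i + c)) (Finset.Icc a b) k := by
  unfold E
  split
  · rfl
  · rw [← Finset.map_add_right_Icc, Finset.powersetCard_map, Finset.sum_map]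
    refine Finset.sum_congr rfl fun I _ => ?_
    rw [show (Finset.mapEmbedding (addRightEmbedding c)).toEmbedding I
      = I.map (addRightEmbedding c) from rfl, Finset.prod_map]
    rfl



lemma emb_inj (m : ℕ) : Function.Injective (emb m) :=
  IsFractionRing.injective (Sqt m) (Lqt m)

lemma Xv_ne_zero (m : ℕ) (a : Fin m) : Xv m a ≠ 0 := by
  intro h
  have := emb_inj m (h.trans (map_zero (emb m)).symm)
  exact X_ne_zero a this

lemma Xv_inj (m : ℕ) {a b : Fin m} (h : Xv m a = Xv m b) : a = b :=
  X_injective (emb_inj m h)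

lemma tL_ne_zero (m : ℕ) : tL m ≠ 0 := by
  intro h
  have h2 := emb_inj m (h.trans (map_zero (emb m)).symm)
  have h3 : (tt : K2) = 0 := by
    have := C_injective (Fin m) K2 (show C tt = C (0 : K2) by rw [h2, map_zero])
    exact this
  have h4 : (X 1 : MvPolynomial (Fin 2) ℚ) = 0 := by
    apply IsFractionRing.injective (MvPolynomial (Fin 2) ℚ) K2
    rw [map_zero]
    exact h3
  exact X_ne_zero 1 h4

lemma Xz_nat (m : ℕ) (hm : 0 < m) (n : ℕ) (hn : n < m) :
    Xz m hm ((n : ℤ) + 1) = Xv m ⟨n, hn⟩ := by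
  unfold Xz
  have h1 : ((n : ℤ) + 1 - 1) = (n : ℤ) := by ring
  have h2 : ((n : ℤ)) / (m : ℤ) = 0 :=
    Int.ediv_eq_zero_of_lt (by positivity) (by exact_mod_cast hn)
  have h3 : ((n : ℤ)) % (m : ℤ) = (n : ℤ) :=
    Int.emod_eq_of_lt (by positivity) (by exact_mod_cast hn)
  simp only [h1, h2, h3, neg_zero, zpow_zero, one_mul]
  apply congrArg
  apply Fin.ext
  simp

lemma Xz_ne (m : ℕ) (hm : 0 < m) (n₁ n₂ : ℕ) (hn₁ : n₁ < m) (hn₂ : n₂ < m)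
    (h : n₁ ≠ n₂) : Xz m hm ((n₁ : ℤ) + 1) ≠ Xz m hm ((n₂ : ℤ) + 1) := by
  rw [Xz_nat m hm n₁ hn₁, Xz_nat m hm n₂ hn₂]
  intro hx
  exact h (by simpa using congrArg Fin.val (Xv_inj m hx))

lemma Xz_ne_zero (m : ℕ) (hm : 0 < m) (n : ℕ) (hn : n < m) :
    Xz m hm ((n : ℤ) + 1) ≠ 0 := by
  rw [Xz_nat m hm n hn]; exact Xv_ne_zero m _


lemma E_equiv {m : ℕ} (φ : Lqt m ≃+* Lqt m) (w : ℤ → Lqt m) (S : Finset ℤ) (k : ℤ) :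
    φ (E m w S k) = E m (fun j => φ (w j)) S k :=
  E_hom (φ : Lqt m →+* Lqt m) w S k

lemma Xz_ne' (m : ℕ) (hm : 0 < m) (i j : ℤ) (h1 : 1 ≤ i) (h2 : i < j) (h3 : j ≤ (m:ℤ)) :
    Xz m hm i ≠ Xz m hm j := by
  have e1 : i = (((i-1).toNat : ℕ) : ℤ) + 1 := by omega
  have e2 : j = (((j-1).toNat : ℕ) : ℤ) + 1 := by omega
  rw [e1, e2]
  exact Xz_ne m hm _ _ (by omega) (by omega) (by omega)

lemma Xz_ne_zero' (m : ℕ) (hm : 0 < m) (i : ℤ) (h1 : 1 ≤ i) (h2 : i ≤ (m:ℤ)) :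
    Xz m hm i ≠ 0 := by
  have e1 : i = (((i-1).toNat : ℕ) : ℤ) + 1 := by omega
  rw [e1]
  exact Xz_ne_zero m hm _ (by omega)

open Finset

variable {F : Type*} [Field F]

lemma tint_id (t : F) (k : ℕ) :
    (∑ l ∈ range k, t ^ l) + t ^ k = 1 + t * (∑ l ∈ range k, t ^ l) := by
  rw [add_comm, ← geom_sum_succ', geom_sum_succ]
  ring

lemma geom_facts (t : F) (k : ℕ) :
    (1 - t ^ k) = (1 - t) * ∑ l ∈ range k, t ^ l := by
  have := geom_sum_mul t k
  linear_combination this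

-- Decomposition of the explicit form of `Gd j` (right interval split at the bottom).
lemma decomp1 (t u x y : F) (ff gg : ℤ → F) (hgg : gg (-1) = 0) (r : ℕ) :
    (∑ k ∈ range (r+2), (1 - t^k) * u * (ff k * (gg ((r:ℤ)+1-k) + y * gg ((r:ℤ)+1-k-1))))
      + u * x * (∑ k ∈ range (r+1), ff k * (gg ((r:ℤ)-k) + y * gg ((r:ℤ)-k-1)))
    = ((u * (∑ k ∈ range (r+2), ff k * gg ((r:ℤ)+1-k))
          - u * (∑ k ∈ range (r+2), t^k * (ff k * gg ((r:ℤ)+1-k))))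
      + x * (u * (∑ k ∈ range (r+1), ff k * gg ((r:ℤ)-k)))
      + y * (u * (∑ k ∈ range (r+1), ff k * gg ((r:ℤ)-k))
          - u * (∑ k ∈ range (r+1), t^k * (ff k * gg ((r:ℤ)-k))))
      + (x*y) * (u * (∑ k ∈ range r, ff k * gg ((r:ℤ)-1-k)))) := by
  have e1 : ∀ k : ℕ, (r:ℤ)+1-k-1 = (r:ℤ)-k := fun k => by ring
  have e2 : ∀ k : ℕ, (r:ℤ)-k-1 = (r:ℤ)-1-k := fun k => by ring
  simp only [e1, e2]
  have h1 : (∑ k ∈ range (r+2), (1 - t^k) * u * (ff k * (gg ((r:ℤ)+1-k) + y * gg ((r:ℤ)-k))))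
      = (∑ k ∈ range (r+2), (1 - t^k) * u * (ff k * gg ((r:ℤ)+1-k)))
        + y * (∑ k ∈ range (r+2), (1 - t^k) * u * (ff k * gg ((r:ℤ)-k))) := by
    rw [Finset.mul_sum, ← Finset.sum_add_distrib]
    exact Finset.sum_congr rfl fun k _ => by ring
  have htop : gg ((r:ℤ) - ((r+1:ℕ):ℤ)) = 0 := by
    rw [show (r:ℤ) - ((r+1:ℕ):ℤ) = -1 by push_cast; ring, hgg]
  have htop2 : gg ((r:ℤ) - 1 - ((r:ℕ):ℤ)) = 0 := by
    rw [show (r:ℤ) - 1 - ((r:ℕ):ℤ) = -1 by push_cast; ring, hgg]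
  have h2 : (∑ k ∈ range (r+2), (1 - t^k) * u * (ff k * gg ((r:ℤ)-k)))
      = (∑ k ∈ range (r+1), (1 - t^k) * u * (ff k * gg ((r:ℤ)-k))) := by
    rw [Finset.sum_range_succ, htop]
    simp
  have h3 : ∀ (n : ℕ) (z : ℤ → ℤ), (∑ k ∈ range n, (1 - t^k) * u * (ff k * gg (z k)))
      = u * (∑ k ∈ range n, ff k * gg (z k)) - u * (∑ k ∈ range n, t^k * (ff k * gg (z k))) := by
    intro n z
    rw [Finset.mul_sum, Finset.mul_sum, ← Finset.sum_sub_distrib]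
    exact Finset.sum_congr rfl fun k _ => by ring
  have h4 : (∑ k ∈ range (r+1), ff k * (gg ((r:ℤ)-k) + y * gg ((r:ℤ)-1-k)))
      = (∑ k ∈ range (r+1), ff k * gg ((r:ℤ)-k))
        + y * (∑ k ∈ range r, ff k * gg ((r:ℤ)-1-k)) := by
    rw [show (∑ k ∈ range r, ff k * gg ((r:ℤ)-1-k))
        = ∑ k ∈ range (r+1), ff k * gg ((r:ℤ)-1-k) by
      rw [Finset.sum_range_succ, htop2, mul_zero, add_zero]]
    rw [Finset.mul_sum, ← Finset.sum_add_distrib]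
    exact Finset.sum_congr rfl fun k _ => by ring
  rw [h1, h2, h4, h3 (r+2) (fun k => (r:ℤ)+1-k), h3 (r+1) (fun k => (r:ℤ)-k)]
  ring

-- Decomposition of the explicit form of `Gd (j+1)` (left interval split at the top).
lemma decomp2 (t u x y : F) (ht : t ≠ 0) (ff gg : ℤ → F)
    (hff : ff (-1) = 0) (hgg : gg (-1) = 0) (r : ℕ) :
    (∑ k ∈ range (r+2), (1 - t^k) * (t⁻¹ * u) * ((ff k + x * ff ((k:ℤ)-1)) * gg ((r:ℤ)+1-k)))
      + (t⁻¹ * u) * y * (∑ k ∈ range (r+1), (ff k + x * ff ((k:ℤ)-1)) * gg ((r:ℤ)-k))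
    = ((t⁻¹ * u * (∑ k ∈ range (r+2), ff k * gg ((r:ℤ)+1-k))
          - t⁻¹ * u * (∑ k ∈ range (r+2), t^k * (ff k * gg ((r:ℤ)+1-k))))
      + x * (t⁻¹ * u * (∑ k ∈ range (r+1), ff k * gg ((r:ℤ)-k))
          - u * (∑ k ∈ range (r+1), t^k * (ff k * gg ((r:ℤ)-k))))
      + t⁻¹ * u * y * (∑ k ∈ range (r+1), ff k * gg ((r:ℤ)-k))
      + t⁻¹ * u * (x * y) * (∑ k ∈ range r, ff k * gg ((r:ℤ)-1-k))) := by
  have h1 : (∑ k ∈ range (r+2), (1 - t^k) * (t⁻¹ * u) * ((ff k + x * ff ((k:ℤ)-1)) * gg ((r:ℤ)+1-k)))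
      = (∑ k ∈ range (r+2), (1 - t^k) * (t⁻¹ * u) * (ff k * gg ((r:ℤ)+1-k)))
        + x * (∑ k ∈ range (r+2), (1 - t^k) * (t⁻¹ * u) * (ff ((k:ℤ)-1) * gg ((r:ℤ)+1-k))) := by
    rw [Finset.mul_sum, ← Finset.sum_add_distrib]
    exact Finset.sum_congr rfl fun k _ => by ring
  have h2 : (∑ k ∈ range (r+2), (1 - t^k) * (t⁻¹ * u) * (ff ((k:ℤ)-1) * gg ((r:ℤ)+1-k)))
      = t⁻¹ * u * (∑ k ∈ range (r+1), ff k * gg ((r:ℤ)-k))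
        - u * (∑ k ∈ range (r+1), t^k * (ff k * gg ((r:ℤ)-k))) := by
    rw [Finset.sum_range_succ']
    simp only [Nat.cast_zero, pow_zero, sub_self, zero_mul, add_zero]
    rw [Finset.mul_sum, Finset.mul_sum, ← Finset.sum_sub_distrib]
    refine Finset.sum_congr rfl fun k _ => ?_
    have c1 : ((k+1:ℕ):ℤ) - 1 = (k:ℤ) := by push_cast; ring
    have c2 : (r:ℤ)+1-((k+1:ℕ):ℤ) = (r:ℤ)-k := by push_cast; ring
    rw [c1, c2]
    have c3 : t^(k+1) * t⁻¹ = t^k := by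
      rw [pow_succ, mul_assoc, mul_inv_cancel₀ ht, mul_one]
    linear_combination (-(ff (k:ℤ) * gg ((r:ℤ)-k)) * u) * c3
  have h3 : (∑ k ∈ range (r+1), (ff k + x * ff ((k:ℤ)-1)) * gg ((r:ℤ)-k))
      = (∑ k ∈ range (r+1), ff k * gg ((r:ℤ)-k))
        + x * (∑ k ∈ range r, ff k * gg ((r:ℤ)-1-k)) := by
    have h4 : (∑ k ∈ range (r+1), ff ((k:ℤ)-1) * gg ((r:ℤ)-k))
        = (∑ k ∈ range r, ff k * gg ((r:ℤ)-1-k)) := by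
      rw [Finset.sum_range_succ']
      simp only [Nat.cast_zero, zero_sub, hff, zero_mul, add_zero]
      refine Finset.sum_congr rfl fun k _ => ?_
      have c1 : ((k+1:ℕ):ℤ) - 1 = (k:ℤ) := by push_cast; ring
      have c2 : (r:ℤ)-((k+1:ℕ):ℤ) = (r:ℤ)-1-k := by push_cast; ring
      rw [c1, c2]
    rw [← h4, Finset.mul_sum, ← Finset.sum_add_distrib]
    exact Finset.sum_congr rfl fun k _ => by ring
  have h0 : (∑ k ∈ range (r+2), (1 - t^k) * (t⁻¹ * u) * (ff k * gg ((r:ℤ)+1-k)))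
      = t⁻¹ * u * (∑ k ∈ range (r+2), ff k * gg ((r:ℤ)+1-k))
        - t⁻¹ * u * (∑ k ∈ range (r+2), t^k * (ff k * gg ((r:ℤ)+1-k))) := by
    rw [Finset.mul_sum, Finset.mul_sum, ← Finset.sum_sub_distrib]
    exact Finset.sum_congr rfl fun k _ => by ring
  rw [h1, h0, h2, h3]
  ring

-- The telescoping step for the partial sums `Sn`.
lemma decomp3 (t u x : F) (ht : t ≠ 0) (ff gg : ℤ → F)
    (hff : ff (-1) = 0) (hgg : gg (-1) = 0) (r : ℕ) :
    (t⁻¹ * u) * (∑ k ∈ range (r+2), (∑ l ∈ range k, t^l) * ((ff k + x * ff ((k:ℤ)-1)) * gg ((r:ℤ)+1-k)))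
    = u * (∑ k ∈ range (r+2), (∑ l ∈ range k, t^l) * (ff k * (gg ((r:ℤ)+1-k) + x * gg ((r:ℤ)+1-k-1))))
      + ((∑ k ∈ range (r+2), (1 - t^k) * (t⁻¹ * u) * (ff k * gg ((r:ℤ)+1-k)))
        + (t⁻¹ * u) * x * (∑ k ∈ range (r+1), ff k * gg ((r:ℤ)-k))) := by
  have e1 : ∀ k : ℕ, (r:ℤ)+1-k-1 = (r:ℤ)-k := fun k => by ring
  simp only [e1]
  have htop : gg ((r:ℤ) - ((r+1:ℕ):ℤ)) = 0 := by
    rw [show (r:ℤ) - ((r+1:ℕ):ℤ) = -1 by push_cast; ring, hgg]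
  -- LHS inner sum
  have h1 : (∑ k ∈ range (r+2), (∑ l ∈ range k, t^l) * ((ff k + x * ff ((k:ℤ)-1)) * gg ((r:ℤ)+1-k)))
      = (∑ k ∈ range (r+2), (∑ l ∈ range k, t^l) * (ff k * gg ((r:ℤ)+1-k)))
        + x * (∑ k ∈ range (r+2), (∑ l ∈ range k, t^l) * (ff ((k:ℤ)-1) * gg ((r:ℤ)+1-k))) := by
    rw [Finset.mul_sum, ← Finset.sum_add_distrib]
    exact Finset.sum_congr rfl fun k _ => by ring
  have h2 : (∑ k ∈ range (r+2), (∑ l ∈ range k, t^l) * (ff ((k:ℤ)-1) * gg ((r:ℤ)+1-k)))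
      = (∑ k ∈ range (r+1), (∑ l ∈ range k, t^l) * (ff k * gg ((r:ℤ)-k)))
        + (∑ k ∈ range (r+1), t^k * (ff k * gg ((r:ℤ)-k))) := by
    rw [Finset.sum_range_succ']
    simp only [Finset.range_zero, Finset.sum_empty, zero_mul, add_zero]
    rw [← Finset.sum_add_distrib]
    refine Finset.sum_congr rfl fun k _ => ?_
    have c1 : ((k+1:ℕ):ℤ) - 1 = (k:ℤ) := by push_cast; ring
    have c2 : (r:ℤ)+1-((k+1:ℕ):ℤ) = (r:ℤ)-k := by push_cast; ring
    rw [c1, c2, geom_sum_succ']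
    ring
  -- first RHS sum split
  have hx3 : (∑ k ∈ range (r+2), (∑ l ∈ range k, t^l) * (ff k * gg ((r:ℤ)-k)))
      = (∑ k ∈ range (r+1), (∑ l ∈ range k, t^l) * (ff k * gg ((r:ℤ)-k))) := by
    rw [Finset.sum_range_succ, htop, mul_zero, mul_zero, add_zero]
  have h3 : (∑ k ∈ range (r+2), (∑ l ∈ range k, t^l) * (ff k * (gg ((r:ℤ)+1-k) + x * gg ((r:ℤ)-k))))
      = (∑ k ∈ range (r+2), (∑ l ∈ range k, t^l) * (ff k * gg ((r:ℤ)+1-k)))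
        + x * (∑ k ∈ range (r+1), (∑ l ∈ range k, t^l) * (ff k * gg ((r:ℤ)-k))) := by
    rw [← hx3, Finset.mul_sum, ← Finset.sum_add_distrib]
    exact Finset.sum_congr rfl fun k _ => by ring
  -- resolve the (1 - t^k) sum via geom_facts
  have h5 : (∑ k ∈ range (r+2), (1 - t^k) * (t⁻¹ * u) * (ff k * gg ((r:ℤ)+1-k)))
      = (t⁻¹*u) * (∑ k ∈ range (r+2), (∑ l ∈ range k, t^l) * (ff k * gg ((r:ℤ)+1-k)))
        - u * (∑ k ∈ range (r+2), (∑ l ∈ range k, t^l) * (ff k * gg ((r:ℤ)+1-k))) := by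
    rw [Finset.mul_sum, Finset.mul_sum, ← Finset.sum_sub_distrib]
    refine Finset.sum_congr rfl fun k _ => ?_
    have c3 : t * t⁻¹ = 1 := mul_inv_cancel₀ ht
    linear_combination (t⁻¹ * u * (ff (k:ℤ) * gg ((r:ℤ)+1-k))) * geom_facts t k
      - ((∑ l ∈ range k, t^l) * u * (ff (k:ℤ) * gg ((r:ℤ)+1-k))) * c3
  -- relation P2 + S2t = Q2 + t*P2
  have h6 : (∑ k ∈ range (r+1), (∑ l ∈ range k, t^l) * (ff k * gg ((r:ℤ)-k)))
        + (∑ k ∈ range (r+1), t^k * (ff k * gg ((r:ℤ)-k)))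
      = (∑ k ∈ range (r+1), ff k * gg ((r:ℤ)-k))
        + t * (∑ k ∈ range (r+1), (∑ l ∈ range k, t^l) * (ff k * gg ((r:ℤ)-k))) := by
    rw [Finset.mul_sum, ← Finset.sum_add_distrib, ← Finset.sum_add_distrib]
    refine Finset.sum_congr rfl fun k _ => ?_
    linear_combination (ff (k:ℤ) * gg ((r:ℤ)-k)) * tint_id t k
  have c3 : t * t⁻¹ = 1 := mul_inv_cancel₀ ht
  rw [h1, h2, h3, h5]
  linear_combination (t⁻¹ * u * x) * h6
    + ((∑ k ∈ range (r+1), (∑ l ∈ range k, t^l) * (ff k * gg ((r:ℤ)-k))) * u * x) * c3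

-- Base case for `Gd 0`.
lemma base1 (t u x : F) (gg e : ℤ → F) (he : ∀ k, e k = if k = 0 then 1 else 0) (r : ℕ) :
    (∑ k ∈ range (r+2), (1 - t^k) * u * (e k * gg ((r:ℤ)+1-k)))
      + u * x * (∑ k ∈ range (r+1), e k * gg ((r:ℤ)-k))
    = u * x * gg (r:ℤ) := by
  have h1 : (∑ k ∈ range (r+2), (1 - t^k) * u * (e k * gg ((r:ℤ)+1-k))) = 0 := by
    apply Finset.sum_eq_zero
    intro k _
    rcases Nat.eq_zero_or_pos k with hk | hk
    · subst hk; simp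
    · rw [he, if_neg (by exact_mod_cast Nat.pos_iff_ne_zero.mp hk)]; ring
  have h2 : (∑ k ∈ range (r+1), e k * gg ((r:ℤ)-k)) = gg (r:ℤ) := by
    rw [Finset.sum_eq_single 0]
    · simp [he]
    · intro k _ hk
      rw [he, if_neg (by exact_mod_cast hk)]; ring
    · intro h; exact absurd (Finset.mem_range.mpr (Nat.succ_pos r)) h
  rw [h1, h2, zero_add]

-- Base case for `Sn 0`.
lemma base2 (t u x : F) (gg e1 : ℤ → F)
    (he1 : ∀ k, e1 k = if k = 0 then 1 else if k = 1 then x else 0) (r : ℕ) :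
    u * (∑ k ∈ range (r+2), (∑ l ∈ range k, t^l) * (e1 k * gg ((r:ℤ)+1-k)))
    = u * x * gg (r:ℤ) := by
  have h1 : (∑ k ∈ range (r+2), (∑ l ∈ range k, t^l) * (e1 k * gg ((r:ℤ)+1-k)))
      = x * gg (r:ℤ) := by
    rw [Finset.sum_eq_single 1]
    · rw [he1]
      push_cast
      norm_num
    · intro k _ hk
      rcases Nat.eq_zero_or_pos k with hk0 | hk0
      · subst hk0; simp
      · rw [he1, if_neg (by exact_mod_cast Nat.pos_iff_ne_zero.mp hk0),
          if_neg (by exact_mod_cast hk)]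
        ring
    · intro h; exact absurd (Finset.mem_range.mpr (by omega)) h
  rw [h1, mul_assoc]

-- Final evaluation of `Sn a`.
lemma finallem (t u : F) (ee e : ℤ → F) (he : ∀ k, e k = if k = 0 then 1 else 0) (r : ℕ) :
    u * (∑ k ∈ range (r+2), (∑ l ∈ range k, t^l) * (ee k * e ((r:ℤ)+1-k)))
    = u * (∑ l ∈ range (r+1), t^l) * ee ((r:ℤ)+1) := by
  have h1 : (∑ k ∈ range (r+2), (∑ l ∈ range k, t^l) * (ee k * e ((r:ℤ)+1-k)))
      = (∑ l ∈ range (r+1), t^l) * ee ((r:ℤ)+1) := by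
    rw [Finset.sum_eq_single (r+1)]
    · rw [he, show (r:ℤ)+1-((r+1:ℕ):ℤ) = 0 by push_cast; ring]
      simp
    · intro k _ hk
      rw [he, if_neg (by intro h; apply hk; omega)]
      ring
    · intro h; exact absurd (Finset.mem_range.mpr (by omega)) h
  rw [h1, mul_assoc]

lemma key_Tinv {F : Type*} [Field F] (σ : F ≃+* F) (t x y A B C D : F)
    (hA : σ A = A) (hB : σ B = B) (hC : σ C = C) (hD : σ D = D)
    (hx : σ x = y) (hy : σ y = x) (hxy : x ≠ y) (hy0 : y ≠ 0) :
    σ (A + x*B + y*C + x*y*D) + (1 - t⁻¹) *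
      (x * y⁻¹ * (A + x*B + y*C + x*y*D) - σ (A + x*B + y*C + x*y*D)) / (1 - x * y⁻¹)
    = t⁻¹*A + (t⁻¹*(x+y) - x)*B + x*C + t⁻¹*(x*y)*D := by
  have hσ : σ (A + x*B + y*C + x*y*D) = A + y*B + x*C + x*y*D := by
    simp only [map_add, map_mul, hA, hB, hC, hD, hx, hy]; ring
  have h1 : 1 - x * y⁻¹ ≠ 0 :=
    sub_ne_zero_of_ne (fun h => hxy ((mul_inv_eq_one₀ hy0).mp h.symm))
  have hN : x * y⁻¹ * (A + x*B + y*C + x*y*D) - (A + y*B + x*C + x*y*D)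
      = (1 - x * y⁻¹) * (-A - (x+y)*B - x*y*D) := by
    field_simp
    ring
  rw [hσ, hN, show (1 - t⁻¹) * ((1 - x * y⁻¹) * (-A - (x+y)*B - x*y*D))
      = (1 - x * y⁻¹) * ((1 - t⁻¹) * (-A - (x+y)*B - x*y*D)) by ring,
    mul_div_cancel_left₀ _ h1]
  ring

lemma step_abstract {F : Type*} [Field F] (σ : F ≃+* F) (t u x y : F) (ht : t ≠ 0)
    (ff gg : ℤ → F) (hff : ff (-1) = 0) (hgg : gg (-1) = 0) (r : ℕ)
    (hx : σ x = y) (hy : σ y = x) (hxy : x ≠ y) (hy0 : y ≠ 0)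
    (hσt : σ t = t) (hσu : σ u = u)
    (hσff : ∀ k : ℤ, σ (ff k) = ff k) (hσgg : ∀ k : ℤ, σ (gg k) = gg k) :
    σ ((∑ k ∈ range (r+2), (1 - t^k) * u * (ff k * (gg ((r:ℤ)+1-k) + y * gg ((r:ℤ)+1-k-1))))
        + u * x * (∑ k ∈ range (r+1), ff k * (gg ((r:ℤ)-k) + y * gg ((r:ℤ)-k-1))))
      + (1 - t⁻¹) *
        (x * y⁻¹ * ((∑ k ∈ range (r+2), (1 - t^k) * u * (ff k * (gg ((r:ℤ)+1-k) + y * gg ((r:ℤ)+1-k-1))))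
            + u * x * (∑ k ∈ range (r+1), ff k * (gg ((r:ℤ)-k) + y * gg ((r:ℤ)-k-1))))
          - σ ((∑ k ∈ range (r+2), (1 - t^k) * u * (ff k * (gg ((r:ℤ)+1-k) + y * gg ((r:ℤ)+1-k-1))))
            + u * x * (∑ k ∈ range (r+1), ff k * (gg ((r:ℤ)-k) + y * gg ((r:ℤ)-k-1)))))
        / (1 - x * y⁻¹)
    = (∑ k ∈ range (r+2), (1 - t^k) * (t⁻¹ * u) * ((ff k + x * ff ((k:ℤ)-1)) * gg ((r:ℤ)+1-k)))
      + (t⁻¹ * u) * y * (∑ k ∈ range (r+1), (ff k + x * ff ((k:ℤ)-1)) * gg ((r:ℤ)-k)) := by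
  have hsum : ∀ (n : ℕ) (z : ℕ → ℤ),
      σ (∑ k ∈ range n, ff k * gg (z k)) = ∑ k ∈ range n, ff k * gg (z k) := by
    intro n z
    rw [map_sum]
    exact Finset.sum_congr rfl fun k _ => by rw [map_mul, hσff, hσgg]
  have hsumt : ∀ (n : ℕ) (z : ℕ → ℤ),
      σ (∑ k ∈ range n, t^k * (ff k * gg (z k))) = ∑ k ∈ range n, t^k * (ff k * gg (z k)) := by
    intro n z
    rw [map_sum]
    exact Finset.sum_congr rfl fun k _ => by rw [map_mul, map_mul, map_pow, hσt, hσff, hσgg]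
  have hA : σ (u * (∑ k ∈ range (r+2), ff k * gg ((r:ℤ)+1-k))
        - u * (∑ k ∈ range (r+2), t^k * (ff k * gg ((r:ℤ)+1-k))))
      = u * (∑ k ∈ range (r+2), ff k * gg ((r:ℤ)+1-k))
        - u * (∑ k ∈ range (r+2), t^k * (ff k * gg ((r:ℤ)+1-k))) := by
    rw [map_sub, map_mul, map_mul, hσu, hsum (r+2) (fun k => (r:ℤ)+1-k),
      hsumt (r+2) (fun k => (r:ℤ)+1-k)]
  have hB : σ (u * (∑ k ∈ range (r+1), ff k * gg ((r:ℤ)-k)))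
      = u * (∑ k ∈ range (r+1), ff k * gg ((r:ℤ)-k)) := by
    rw [map_mul, hσu, hsum (r+1) (fun k => (r:ℤ)-k)]
  have hC : σ (u * (∑ k ∈ range (r+1), ff k * gg ((r:ℤ)-k))
        - u * (∑ k ∈ range (r+1), t^k * (ff k * gg ((r:ℤ)-k))))
      = u * (∑ k ∈ range (r+1), ff k * gg ((r:ℤ)-k))
        - u * (∑ k ∈ range (r+1), t^k * (ff k * gg ((r:ℤ)-k))) := by
    rw [map_sub, map_mul, map_mul, hσu, hsum (r+1) (fun k => (r:ℤ)-k),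
      hsumt (r+1) (fun k => (r:ℤ)-k)]
  have hD : σ (u * (∑ k ∈ range r, ff k * gg ((r:ℤ)-1-k)))
      = u * (∑ k ∈ range r, ff k * gg ((r:ℤ)-1-k)) := by
    rw [map_mul, hσu, hsum r (fun k => (r:ℤ)-1-k)]
  rw [decomp1 t u x y ff gg hgg r, decomp2 t u x y ht ff gg hff hgg r,
    key_Tinv σ t x y _ _ _ _ hA hB hC hD hx hy hxy hy0]
  ring

end Stmt6Aux

/-- for `0 ≤ a < m` and `r ≥ 0`,
`Ŝ_a(e_r(X_1,…,X_a)) = t^{-a} [r+1]_t e_{r+1}(X_1,…,X_{a+1})`, where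
`Ŝ_a = (1 + T_1⁻¹ + T_2⁻¹T_1⁻¹ + ⋯ + T_a⁻¹⋯T_1⁻¹) ∘ Π` and
`Π(F) = X_1 F(X_2,…,X_m,q⁻¹X_1)`. -/
theorem stmt_6 (m : ℕ) (hm : 0 < m)
    (s : ℕ → (Lqt m ≃+* Lqt m))
    (hs : ∀ (a b : Fin m), (b : ℕ) = (a : ℕ) + 1 →
      ∀ p : Sqt m, s ((a : ℕ) + 1) (emb m p) = emb m (rename (Equiv.swap a b) p))
    (Φ : Lqt m →+* Lqt m)
    (hΦ : ∀ p : Sqt m, Φ (emb m p) = emb m (aeval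
      (fun a : Fin m => if h : (a : ℕ) + 1 < m then (X ⟨(a : ℕ) + 1, h⟩ : Sqt m)
        else C qq⁻¹ * X ⟨0, hm⟩) p))
    (Tinv : ℕ → Lqt m → Lqt m)
    (hTinv : ∀ (i : ℕ) (F : Lqt m), Tinv i F = s i F + (1 - (tL m)⁻¹) *
      (Xz m hm i * (Xz m hm (i + 1))⁻¹ * F - s i F) /
        (1 - Xz m hm i * (Xz m hm (i + 1))⁻¹))
    (Pio : Lqt m → Lqt m) (hPio : ∀ F, Pio F = Xz m hm 1 * Φ F)
    (Ch : ℕ → Lqt m → Lqt m) (hCh0 : ∀ F, Ch 0 F = F)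
    (hChS : ∀ (j : ℕ) (F : Lqt m), Ch (j + 1) F = Tinv (j + 1) (Ch j F))
    (Sh : ℤ → Lqt m → Lqt m)
    (hShneg : ∀ a : ℤ, a < 0 → ∀ F, Sh a F = 0)
    (hSh : ∀ (a : ℕ) (F : Lqt m), Sh a F = ∑ j ∈ Finset.range (a + 1), Ch j (Pio F))
    (a r : ℕ) (ha : a < m) :
    Sh a (esym m hm 1 a r) =
      (tL m ^ a)⁻¹ * (∑ j ∈ Finset.range (r + 1), tL m ^ j) *
        esym m hm 1 (a + 1) (r + 1) := by
  classical
  have ht : tL m ≠ 0 := Stmt6Aux.tL_ne_zero m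
  -- the action of Φ on the variables
  have hΦXz : ∀ n : ℕ, n + 1 < m → Φ (Xz m hm ((n:ℤ)+1)) = Xz m hm (((n+1:ℕ):ℤ)+1) := by
    intro n hn
    rw [Stmt6Aux.Xz_nat m hm n (by omega), Stmt6Aux.Xz_nat m hm (n+1) hn]
    have h := hΦ (X (⟨n, by omega⟩ : Fin m))
    simp only [aeval_X] at h
    rw [dif_pos hn] at h
    exact h
  -- the action of s (j+1) on the variables
  have hsX : ∀ (j : ℕ) (hj : j + 1 < m) (v : Fin m),
      s (j+1) (Xv m v) = Xv m (Equiv.swap (⟨j, by omega⟩ : Fin m) ⟨j+1, hj⟩ v) := by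
    intro j hj v
    have h := hs ⟨j, by omega⟩ ⟨j+1, hj⟩ rfl (X v)
    simpa [Xv, rename_X] using h
  have hstL : ∀ (j : ℕ), j + 1 < m → s (j+1) (tL m) = tL m := by
    intro j hj
    have h := hs ⟨j, by omega⟩ ⟨j+1, hj⟩ rfl (C tt)
    simpa [tL, rename_C] using h
  have hsXz : ∀ (j : ℕ) (hj : j + 1 < m) (n : ℕ) (hn : n < m), n ≠ j → n ≠ j+1 →
      s (j+1) (Xz m hm ((n:ℤ)+1)) = Xz m hm ((n:ℤ)+1) := by
    intro j hj n hn h1 h2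
    rw [Stmt6Aux.Xz_nat m hm n hn, hsX j hj]
    refine congrArg (Xv m) (Equiv.swap_apply_of_ne_of_ne ?_ ?_)
    · exact fun h => h1 (by simpa using congrArg Fin.val h)
    · exact fun h => h2 (by simpa using congrArg Fin.val h)
  -- s (j+1) fixes symmetric functions in the other variables
  have hsE : ∀ (j : ℕ), j + 1 < m → ∀ (c d : ℤ), 1 ≤ c → d ≤ (m:ℤ) →
      (∀ l : ℤ, c ≤ l → l ≤ d → l ≠ (j:ℤ)+1 ∧ l ≠ (j:ℤ)+2) →
      ∀ k : ℤ, s (j+1) (Stmt6Aux.E m (Xz m hm) (Finset.Icc c d) k)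
        = Stmt6Aux.E m (Xz m hm) (Finset.Icc c d) k := by
    intro j hj c d hc hd hl k
    rw [Stmt6Aux.E_equiv (s (j+1))]
    apply Stmt6Aux.E_congr
    intro l hlm
    rw [Finset.mem_Icc] at hlm
    obtain ⟨n, hnm, hne1, hne2, rfl⟩ :
        ∃ n : ℕ, n < m ∧ n ≠ j ∧ n ≠ j + 1 ∧ l = (n:ℤ)+1 := by
      refine ⟨(l-1).toNat, by omega, ?_, ?_, by omega⟩
      · have := (hl l hlm.1 hlm.2).1
        omega
      · have := (hl l hlm.1 hlm.2).2
        omega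
    exact hsXz j hj n hnm hne1 hne2
  -- the action of Π on e_r(X_1,...,X_a)
  have hpt : ∀ l ∈ Finset.Icc (1:ℤ) (a:ℤ), Φ (Xz m hm l) = Xz m hm (l+1) := by
    intro l hl
    rw [Finset.mem_Icc] at hl
    obtain ⟨n, hn, rfl⟩ : ∃ n : ℕ, n + 1 < m ∧ l = (n:ℤ)+1 :=
      ⟨(l-1).toNat, by omega, by omega⟩
    rw [hΦXz n hn]
    exact congrArg _ (by push_cast; ring)
  have hPioE : Pio (esym m hm 1 (a:ℤ) (r:ℤ)) =
      Xz m hm 1 * Stmt6Aux.E m (Xz m hm) (Finset.Icc (2:ℤ) ((a:ℤ)+1)) (r:ℤ) := by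
    rw [hPio, Stmt6Aux.esym_eq_E]
    congr 1
    rw [Stmt6Aux.E_hom Φ (Xz m hm) (Finset.Icc (1:ℤ) (a:ℤ)) (r:ℤ),
      Stmt6Aux.E_congr (w' := fun l => Xz m hm (l+1)) (r:ℤ) hpt]
    have hmap := Stmt6Aux.E_map (m := m) (Xz m hm) 1 (a:ℤ) 1 (r:ℤ)
    norm_num at hmap
    exact hmap.symm
  -- the family Gd and the partial sums Sn
  set Gd : ℕ → Lqt m := fun j =>
    (∑ k ∈ Finset.range (r+2), (1 - tL m^k) * (tL m^j)⁻¹ *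
      (Stmt6Aux.E m (Xz m hm) (Finset.Icc (1:ℤ) (j:ℤ)) (k:ℤ) *
        Stmt6Aux.E m (Xz m hm) (Finset.Icc ((j:ℤ)+2) ((a:ℤ)+1)) ((r:ℤ)+1-(k:ℤ))))
    + (tL m^j)⁻¹ * Xz m hm ((j:ℤ)+1) *
      (∑ k ∈ Finset.range (r+1), Stmt6Aux.E m (Xz m hm) (Finset.Icc (1:ℤ) (j:ℤ)) (k:ℤ) *
        Stmt6Aux.E m (Xz m hm) (Finset.Icc ((j:ℤ)+2) ((a:ℤ)+1)) ((r:ℤ)-(k:ℤ))) with hGd_def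
  set Sn : ℕ → Lqt m := fun n => (tL m^n)⁻¹ *
    (∑ k ∈ Finset.range (r+2), (∑ l ∈ Finset.range k, tL m^l) *
      (Stmt6Aux.E m (Xz m hm) (Finset.Icc (1:ℤ) ((n:ℤ)+1)) (k:ℤ) *
        Stmt6Aux.E m (Xz m hm) (Finset.Icc ((n:ℤ)+2) ((a:ℤ)+1)) ((r:ℤ)+1-(k:ℤ)))) with hSn_def
  -- empty interval values
  have he : ∀ k : ℤ, Stmt6Aux.E m (Xz m hm) (Finset.Icc (1:ℤ) ((0:ℕ):ℤ)) k
      = if k = 0 then 1 else 0 := by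
    intro k
    rw [show Finset.Icc (1:ℤ) ((0:ℕ):ℤ) = ∅ from Finset.Icc_eq_empty (by norm_num),
      Stmt6Aux.E_empty]
  -- Ch j (Pio F) = Gd j
  have hGdval : ∀ j : ℕ, j ≤ a → Ch j (Pio (esym m hm 1 (a:ℤ) (r:ℤ))) = Gd j := by
    intro j
    induction j with
    | zero =>
      intro _
      rw [hCh0, hPioE]
      simp only [hGd_def]
      refine Eq.trans ?_ (Stmt6Aux.base1 (tL m) ((tL m^(0:ℕ))⁻¹) (Xz m hm (((0:ℕ):ℤ)+1))
        (fun s2 => Stmt6Aux.E m (Xz m hm) (Finset.Icc (((0:ℕ):ℤ)+2) ((a:ℤ)+1)) s2) _ he r).symm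
      rw [pow_zero, inv_one, one_mul,
        show Xz m hm (((0:ℕ):ℤ)+1) = Xz m hm 1 from congrArg _ (by norm_num),
        show Finset.Icc (((0:ℕ):ℤ)+2) ((a:ℤ)+1) = Finset.Icc (2:ℤ) ((a:ℤ)+1) from by norm_num]
    | succ j ih =>
      intro hja
      have hjm : j + 1 < m := by omega
      rw [hChS j, ih (by omega), hTinv]
      simp only [hGd_def]
      have hx1 : Xz m hm (((j+1:ℕ):ℤ)) = Xz m hm ((j:ℤ)+1) := congrArg _ (by push_cast; ring)
      have hy1 : Xz m hm (((j+1:ℕ):ℤ)+1) = Xz m hm ((j:ℤ)+2) := congrArg _ (by push_cast; ring)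
      rw [hx1, hy1]
      have hIccL : Finset.Icc (1:ℤ) ((j+1:ℕ):ℤ) = insert ((j:ℤ)+1) (Finset.Icc (1:ℤ) (j:ℤ)) := by
        ext l
        simp only [Finset.mem_Icc, Finset.mem_insert]
        omega
      have hIccR : Finset.Icc (((j+1:ℕ):ℤ)+2) ((a:ℤ)+1) = Finset.Icc ((j:ℤ)+3) ((a:ℤ)+1) := by
        congr 1
      have hpow : (tL m^(j+1))⁻¹ = (tL m)⁻¹ * (tL m^j)⁻¹ := by
        rw [pow_succ, mul_inv, mul_comm]
      have hfsplit : ∀ k : ℤ, Stmt6Aux.E m (Xz m hm) (insert ((j:ℤ)+1) (Finset.Icc (1:ℤ) (j:ℤ))) k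
          = Stmt6Aux.E m (Xz m hm) (Finset.Icc (1:ℤ) (j:ℤ)) k
            + Xz m hm ((j:ℤ)+1) * Stmt6Aux.E m (Xz m hm) (Finset.Icc (1:ℤ) (j:ℤ)) (k-1) :=
        fun k => Stmt6Aux.E_insert _ (by rw [Finset.mem_Icc]; omega) k
      have hgsplit : ∀ k : ℤ, Stmt6Aux.E m (Xz m hm) (Finset.Icc ((j:ℤ)+2) ((a:ℤ)+1)) k
          = Stmt6Aux.E m (Xz m hm) (Finset.Icc ((j:ℤ)+3) ((a:ℤ)+1)) k
            + Xz m hm ((j:ℤ)+2) * Stmt6Aux.E m (Xz m hm) (Finset.Icc ((j:ℤ)+3) ((a:ℤ)+1)) (k-1) := by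
        intro k
        rw [show Finset.Icc ((j:ℤ)+2) ((a:ℤ)+1) = insert ((j:ℤ)+2) (Finset.Icc ((j:ℤ)+3) ((a:ℤ)+1)) by
          ext l
          simp only [Finset.mem_Icc, Finset.mem_insert]
          omega]
        exact Stmt6Aux.E_insert _ (by rw [Finset.mem_Icc]; omega) k
      simp only [hIccL, hIccR, hpow, hfsplit, hgsplit]
      have hsx : s (j+1) (Xz m hm ((j:ℤ)+1)) = Xz m hm ((j:ℤ)+2) := by
        rw [show ((j:ℤ)+2) = (((j+1:ℕ):ℤ)+1) by push_cast; ring,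
          Stmt6Aux.Xz_nat m hm j (by omega), Stmt6Aux.Xz_nat m hm (j+1) hjm, hsX j hjm]
        exact congrArg (Xv m) (Equiv.swap_apply_left _ _)
      have hsy : s (j+1) (Xz m hm ((j:ℤ)+2)) = Xz m hm ((j:ℤ)+1) := by
        rw [show ((j:ℤ)+2) = (((j+1:ℕ):ℤ)+1) by push_cast; ring,
          Stmt6Aux.Xz_nat m hm j (by omega), Stmt6Aux.Xz_nat m hm (j+1) hjm, hsX j hjm]
        exact congrArg (Xv m) (Equiv.swap_apply_right _ _)
      have hxy : Xz m hm ((j:ℤ)+1) ≠ Xz m hm ((j:ℤ)+2) :=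
        Stmt6Aux.Xz_ne' m hm _ _ (by omega) (by omega) (by omega)
      have hy0 : Xz m hm ((j:ℤ)+2) ≠ 0 :=
        Stmt6Aux.Xz_ne_zero' m hm _ (by omega) (by omega)
      have hst : s (j+1) (tL m) = tL m := hstL j hjm
      have hsu : s (j+1) ((tL m^j)⁻¹) = (tL m^j)⁻¹ := by
        rw [map_inv₀, map_pow, hst]
      have hsff : ∀ k : ℤ, s (j+1) (Stmt6Aux.E m (Xz m hm) (Finset.Icc (1:ℤ) (j:ℤ)) k)
          = Stmt6Aux.E m (Xz m hm) (Finset.Icc (1:ℤ) (j:ℤ)) k :=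
        hsE j hjm 1 (j:ℤ) (by norm_num) (by omega) (fun l h1 h2 => ⟨by omega, by omega⟩)
      have hsgg : ∀ k : ℤ, s (j+1) (Stmt6Aux.E m (Xz m hm) (Finset.Icc ((j:ℤ)+3) ((a:ℤ)+1)) k)
          = Stmt6Aux.E m (Xz m hm) (Finset.Icc ((j:ℤ)+3) ((a:ℤ)+1)) k :=
        hsE j hjm ((j:ℤ)+3) ((a:ℤ)+1) (by omega) (by omega) (fun l h1 h2 => ⟨by omega, by omega⟩)
      exact Stmt6Aux.step_abstract (s (j+1)) (tL m) ((tL m^j)⁻¹)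
        (Xz m hm ((j:ℤ)+1)) (Xz m hm ((j:ℤ)+2)) ht
        (fun k => Stmt6Aux.E m (Xz m hm) (Finset.Icc (1:ℤ) (j:ℤ)) k)
        (fun k => Stmt6Aux.E m (Xz m hm) (Finset.Icc ((j:ℤ)+3) ((a:ℤ)+1)) k)
        (Stmt6Aux.E_neg _ _ (by norm_num)) (Stmt6Aux.E_neg _ _ (by norm_num)) r
        hsx hsy hxy hy0 hst hsu hsff hsgg
  -- partial sums
  have hSnsum : ∀ n : ℕ, n ≤ a → ∑ j ∈ Finset.range (n+1), Gd j = Sn n := by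
    intro n
    induction n with
    | zero =>
      intro _
      rw [Finset.sum_range_one]
      simp only [hGd_def, hSn_def]
      have he1 : ∀ k : ℤ, Stmt6Aux.E m (Xz m hm) (Finset.Icc (1:ℤ) (((0:ℕ):ℤ)+1)) k
          = if k = 0 then 1 else if k = 1 then Xz m hm (((0:ℕ):ℤ)+1) else 0 := by
        intro k
        rw [show Finset.Icc (1:ℤ) (((0:ℕ):ℤ)+1) = insert (((0:ℕ):ℤ)+1) (∅ : Finset ℤ) by
          ext l
          simp only [Finset.mem_Icc, Finset.mem_insert, Finset.notMem_empty, or_false]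
          omega]
        rw [Stmt6Aux.E_insert _ (Finset.notMem_empty _) k, Stmt6Aux.E_empty, Stmt6Aux.E_empty]
        rcases eq_or_ne k 0 with rfl | h0
        · norm_num
        · rcases eq_or_ne k 1 with rfl | h1
          · norm_num
          · rw [if_neg h0, if_neg h0, if_neg h1, if_neg (show k-1 ≠ 0 by omega)]
            ring
      exact (Stmt6Aux.base1 (tL m) ((tL m^(0:ℕ))⁻¹) (Xz m hm (((0:ℕ):ℤ)+1))
          (fun s2 => Stmt6Aux.E m (Xz m hm) (Finset.Icc (((0:ℕ):ℤ)+2) ((a:ℤ)+1)) s2) _ he r).trans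
        (Stmt6Aux.base2 (tL m) ((tL m^(0:ℕ))⁻¹) (Xz m hm (((0:ℕ):ℤ)+1))
          (fun s2 => Stmt6Aux.E m (Xz m hm) (Finset.Icc (((0:ℕ):ℤ)+2) ((a:ℤ)+1)) s2) _ he1 r).symm
    | succ n ihn =>
      intro hna
      rw [Finset.sum_range_succ, ihn (by omega)]
      simp only [hGd_def, hSn_def]
      have hx1 : Xz m hm (((n+1:ℕ):ℤ)+1) = Xz m hm ((n:ℤ)+2) := congrArg _ (by push_cast; ring)
      rw [hx1]
      have hpow : (tL m^(n+1))⁻¹ = (tL m)⁻¹ * (tL m^n)⁻¹ := by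
        rw [pow_succ, mul_inv, mul_comm]
      have hIccL : Finset.Icc (1:ℤ) (((n+1:ℕ):ℤ)+1) = insert ((n:ℤ)+2) (Finset.Icc (1:ℤ) ((n:ℤ)+1)) := by
        ext l
        simp only [Finset.mem_Icc, Finset.mem_insert]
        omega
      have hIccR : Finset.Icc (((n+1:ℕ):ℤ)+2) ((a:ℤ)+1) = Finset.Icc ((n:ℤ)+3) ((a:ℤ)+1) := by
        congr 1
      have hIccL1 : Finset.Icc (1:ℤ) ((n+1:ℕ):ℤ) = Finset.Icc (1:ℤ) ((n:ℤ)+1) := by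
        congr 1
      have hfsplit : ∀ k : ℤ, Stmt6Aux.E m (Xz m hm) (insert ((n:ℤ)+2) (Finset.Icc (1:ℤ) ((n:ℤ)+1))) k
          = Stmt6Aux.E m (Xz m hm) (Finset.Icc (1:ℤ) ((n:ℤ)+1)) k
            + Xz m hm ((n:ℤ)+2) * Stmt6Aux.E m (Xz m hm) (Finset.Icc (1:ℤ) ((n:ℤ)+1)) (k-1) :=
        fun k => Stmt6Aux.E_insert _ (by rw [Finset.mem_Icc]; omega) k
      have hgsplit : ∀ k : ℤ, Stmt6Aux.E m (Xz m hm) (Finset.Icc ((n:ℤ)+2) ((a:ℤ)+1)) k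
          = Stmt6Aux.E m (Xz m hm) (Finset.Icc ((n:ℤ)+3) ((a:ℤ)+1)) k
            + Xz m hm ((n:ℤ)+2) * Stmt6Aux.E m (Xz m hm) (Finset.Icc ((n:ℤ)+3) ((a:ℤ)+1)) (k-1) := by
        intro k
        rw [show Finset.Icc ((n:ℤ)+2) ((a:ℤ)+1) = insert ((n:ℤ)+2) (Finset.Icc ((n:ℤ)+3) ((a:ℤ)+1)) by
          ext l
          simp only [Finset.mem_Icc, Finset.mem_insert]
          omega]
        exact Stmt6Aux.E_insert _ (by rw [Finset.mem_Icc]; omega) k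
      simp only [hIccL, hIccR, hIccL1, hpow, hfsplit, hgsplit]
      exact (Stmt6Aux.decomp3 (tL m) ((tL m^n)⁻¹) (Xz m hm ((n:ℤ)+2)) ht
        (fun k => Stmt6Aux.E m (Xz m hm) (Finset.Icc (1:ℤ) ((n:ℤ)+1)) k)
        (fun k => Stmt6Aux.E m (Xz m hm) (Finset.Icc ((n:ℤ)+3) ((a:ℤ)+1)) k)
        (Stmt6Aux.E_neg _ _ (by norm_num)) (Stmt6Aux.E_neg _ _ (by norm_num)) r).symm
  -- conclusion
  rw [hSh a (esym m hm 1 (a:ℤ) (r:ℤ)),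
    show (∑ j ∈ Finset.range (a+1), Ch j (Pio (esym m hm 1 (a:ℤ) (r:ℤ))))
        = ∑ j ∈ Finset.range (a+1), Gd j from
      Finset.sum_congr rfl fun j hj => hGdval j (Nat.lt_succ_iff.mp (Finset.mem_range.mp hj)),
    hSnsum a le_rfl]
  simp only [hSn_def]
  have hEe : ∀ k : ℤ, Stmt6Aux.E m (Xz m hm) (Finset.Icc ((a:ℤ)+2) ((a:ℤ)+1)) k
      = if k = 0 then 1 else 0 := by
    intro k
    rw [Finset.Icc_eq_empty (by omega), Stmt6Aux.E_empty]
  refine Eq.trans (Stmt6Aux.finallem (tL m) ((tL m^a)⁻¹)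
    (fun k => Stmt6Aux.E m (Xz m hm) (Finset.Icc (1:ℤ) ((a:ℤ)+1)) k) _ hEe r) ?_
  rw [Stmt6Aux.esym_eq_E]
end

section
/- In the affine Hecke algebra of GL_m over Q(q,t), for any a with 0 ≤ a < m-1, one has Ŝ_{a+1}·Ŝ_a·(1 - t·T_{m-1}^{-1}) = 0, where Ŝ_a = (1 + T_1^{-1} + T_2^{-1}T_1^{-1} + ... + T_a^{-1}···T_1^{-1})·Π. -/
set_option maxHeartbeats 1000000
set_option synthInstance.maxHeartbeats 400000

open MvPolynomial

/-- Auxiliary chain `U (s+j-1) * ⋯ * U s` (with value `1` for `j = 0`). -/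
def hecCh {A : Type*} [Ring A] (U : ℕ → A) (s : ℕ) : ℕ → A
  | 0 => 1
  | j+1 => U (s + j) * hecCh U s j

@[simp] lemma hecCh_zero {A : Type*} [Ring A] (U : ℕ → A) (s : ℕ) : hecCh U s 0 = 1 := rfl

@[simp] lemma hecCh_succ {A : Type*} [Ring A] (U : ℕ → A) (s j : ℕ) :
    hecCh U s (j+1) = U (s + j) * hecCh U s j := rfl

/-- Auxiliary sum of chains. -/
def hecEE {A : Type*} [Ring A] (U : ℕ → A) (s k : ℕ) : A :=
  ∑ j ∈ Finset.range (k+1), hecCh U s j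

lemma hecEE_zero {A : Type*} [Ring A] (U : ℕ → A) (s : ℕ) : hecEE U s 0 = 1 := by
  simp [hecEE]

lemma hecCh_shift {A : Type*} [Ring A] (U : ℕ → A) (s : ℕ) :
    ∀ j : ℕ, hecCh U s (j+1) = hecCh U (s+1) j * U s := by
  intro j
  induction j with
  | zero => simp
  | succ j ihj =>
      rw [hecCh_succ U s (j+1), ihj, hecCh_succ U (s+1) j, ← mul_assoc,
        show s + (j+1) = s + 1 + j by omega]

lemma hecEE_succ {A : Type*} [Ring A] (U : ℕ → A) (s k : ℕ) :
    hecEE U s (k+1) = 1 + hecEE U (s+1) k * U s := by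
  unfold hecEE
  rw [Finset.sum_range_succ', Finset.sum_mul]
  have h1 : ∀ j ∈ Finset.range (k+1), hecCh U s (j+1) = hecCh U (s+1) j * U s :=
    fun j _ => hecCh_shift U s j
  rw [Finset.sum_congr rfl h1, hecCh_zero]
  exact add_comm _ _

lemma hecCh_comm {A : Type*} [Ring A] (U : ℕ → A) (x : A) (s : ℕ) :
    ∀ j : ℕ, (∀ i : ℕ, i < j → x * U (s + i) = U (s + i) * x) →
      x * hecCh U s j = hecCh U s j * x := by
  intro j
  induction j with
  | zero => intro _; simp
  | succ j ihj =>
      intro h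
      rw [hecCh_succ, ← mul_assoc, h j (by omega), mul_assoc,
        ihj (fun i hi => h i (by omega)), ← mul_assoc]

lemma hecEE_comm {A : Type*} [Ring A] (U : ℕ → A) (x : A) (s k : ℕ)
    (h : ∀ i : ℕ, i < k → x * U (s + i) = U (s + i) * x) :
    x * hecEE U s k = hecEE U s k * x := by
  unfold hecEE
  rw [Finset.mul_sum, Finset.sum_mul]
  refine Finset.sum_congr rfl (fun j hj => ?_)
  refine hecCh_comm U x s j (fun i hi => h i ?_)
  have := Finset.mem_range.mp hj
  omega

/-- The key finite Hecke algebra identity, by induction. -/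
theorem hec_key {A : Type*} [Ring A] (τ : A) (hτ : ∀ x : A, τ * x = x * τ)
    (n : ℕ) (V U : ℕ → A)
    (hUV : ∀ i : ℕ, U i * V i = 1)
    (hL0 : ∀ i : ℕ, 1 ≤ i → i ≤ n → τ * U i = V i - τ + 1)
    (hbr : ∀ i : ℕ, 1 ≤ i → i + 1 ≤ n →
      U i * U (i+1) * V i = V (i+1) * (U i * U (i+1)))
    (hcm : ∀ i j : ℕ, 1 ≤ i → i + 2 ≤ j → j ≤ n → U i * U j = U j * U i) :
    ∀ b s : ℕ, 1 ≤ s → s + b ≤ n →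
      hecEE U s (b+1) * hecEE U (s+1) b * (V s - τ) = 0 := by
  intro b
  induction b with
  | zero =>
      intro s hs hsn
      have hL1 : U s * (V s - τ) = -(V s - τ) := by
        rw [mul_sub, hUV s, ← hτ (U s), hL0 s hs (by omega)]
        abel
      rw [hecEE_succ, hecEE_zero, one_mul, mul_one, add_mul, one_mul, hL1]
      abel
  | succ b ih =>
      intro s hs hsn
      have hL1 : U s * (V s - τ) = -(V s - τ) := by
        rw [mul_sub, hUV s, ← hτ (U s), hL0 s hs (by omega)]
        abel
      have hA1 : hecEE U s (b+1+1) = 1 + hecEE U (s+1) (b+1) * U s := hecEE_succ U s (b+1)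
      have hA2 : hecEE U (s+1) (b+1) = 1 + hecEE U (s+1+1) b * U (s+1) := hecEE_succ U (s+1) b
      have hcomm3 : U s * hecEE U (s+1+1) b = hecEE U (s+1+1) b * U s := by
        apply hecEE_comm
        intro i hi
        exact hcm s (s+1+1+i) hs (by omega) (by omega)
      have hbr' : U s * U (s+1) * (V s - τ) = (V (s+1) - τ) * (U s * U (s+1)) := by
        rw [mul_sub, sub_mul, hbr s hs (by omega), hτ (U s * U (s+1))]
      have e1 : hecEE U s (b+1+1) * (V s - τ)
          = -(hecEE U (s+1+1) b * (U (s+1) * (V s - τ))) := by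
        rw [hA1, add_mul, one_mul, mul_assoc, hL1, hA2]
        noncomm_ring
      calc hecEE U s (b+1+1) * hecEE U (s+1) (b+1) * (V s - τ)
          = hecEE U s (b+1+1) * ((1 + hecEE U (s+1+1) b * U (s+1)) * (V s - τ)) := by
            rw [← hA2, ← mul_assoc]
        _ = hecEE U s (b+1+1) * (V s - τ)
              + hecEE U s (b+1+1) * (hecEE U (s+1+1) b * (U (s+1) * (V s - τ))) := by
            noncomm_ring
        _ = (hecEE U s (b+1+1) - 1) * (hecEE U (s+1+1) b * (U (s+1) * (V s - τ))) := by
            rw [e1]; noncomm_ring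
        _ = (hecEE U (s+1) (b+1) * U s) * (hecEE U (s+1+1) b * (U (s+1) * (V s - τ))) := by
            rw [hA1]; noncomm_ring
        _ = hecEE U (s+1) (b+1) * ((U s * hecEE U (s+1+1) b) * (U (s+1) * (V s - τ))) := by
            noncomm_ring
        _ = hecEE U (s+1) (b+1) * ((hecEE U (s+1+1) b * U s) * (U (s+1) * (V s - τ))) := by
            rw [hcomm3]
        _ = hecEE U (s+1) (b+1) * hecEE U (s+1+1) b * (U s * U (s+1) * (V s - τ)) := by
            noncomm_ring
        _ = hecEE U (s+1) (b+1) * hecEE U (s+1+1) b * ((V (s+1) - τ) * (U s * U (s+1))) := by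
            rw [hbr']
        _ = (hecEE U (s+1) (b+1) * hecEE U (s+1+1) b * (V (s+1) - τ)) * (U s * U (s+1)) := by
            noncomm_ring
        _ = 0 := by rw [ih (s+1) (by omega) (by omega), zero_mul]

/-- in the affine Hecke algebra of `GL_m` over `ℚ(q,t)`, for
`0 ≤ a < m - 1` one has `Ŝ_{a+1} Ŝ_a (1 - t T_{m-1}⁻¹) = 0`, where
`Ŝ_a = (1 + T_1⁻¹ + T_2⁻¹T_1⁻¹ + ⋯ + T_a⁻¹⋯T_1⁻¹) Π`.  Here `c j` is the
chain `T_j⁻¹ T_{j-1}⁻¹ ⋯ T_1⁻¹` (with `c 0 = 1`). -/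
theorem stmt_8 (m : ℕ) (hm : 0 < m)
    (A : Type*) [Ring A] [Algebra K2 A]
    (T Tinv : ZMod m → A) (P Pinv : A)
    (hTinv : ∀ i, T i * Tinv i = 1 ∧ Tinv i * T i = 1)
    (hquad : ∀ i, (T i - algebraMap K2 A tt) * (T i + 1) = 0)
    (hbraid : 2 < m → ∀ i, T i * T (i + 1) * T i = T (i + 1) * T i * T (i + 1))
    (hcommT : ∀ i j : ZMod m, j ≠ i + 1 → i ≠ j + 1 → T i * T j = T j * T i)
    (hP : P * Pinv = 1 ∧ Pinv * P = 1)
    (hPT : ∀ i, P * T i = T (i + 1) * P)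
    (c : ℕ → A) (hc0 : c 0 = 1)
    (hcS : ∀ j : ℕ, c (j + 1) = Tinv (((j : ℕ) + 1 : ℕ) : ZMod m) * c j)
    (Sh : ℕ → A)
    (hSh : ∀ a : ℕ, Sh a = (∑ j ∈ Finset.range (a + 1), c j) * P)
    (a : ℕ) (ha : a + 1 < m) :
    Sh (a + 1) * Sh a *
      (1 - algebraMap K2 A tt * Tinv (((m - 1 : ℕ) : ZMod m))) = 0 := by
  haveI : NeZero m := ⟨by omega⟩
  set τ : A := algebraMap K2 A tt with hτdef
  have hτ : ∀ x : A, τ * x = x * τ := by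
    intro x; rw [hτdef]; exact Algebra.commutes tt x
  -- quadratic relation consequence: τ * Tinv i = T i - τ + 1
  have hq : ∀ i : ZMod m, τ * Tinv i = T i - τ + 1 := by
    intro i
    have h1 : (T i - τ) * ((T i + 1) * Tinv i) = 0 := by
      rw [← mul_assoc, hquad i, zero_mul]
    rw [add_mul, one_mul, (hTinv i).1] at h1
    rw [mul_add, mul_one, sub_mul] at h1
    rw [(hTinv i).1] at h1
    have h3 : T i - τ + 1 - τ * Tinv i = T i - τ + (1 - τ * Tinv i) := by abel
    rw [h1] at h3
    exact (sub_eq_zero.mp h3).symm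
  -- P conjugates Tinv's
  have hPU : ∀ i : ZMod m, P * Tinv i = Tinv (i+1) * P := by
    intro i
    have e1 : Tinv (i+1) * (T (i+1) * (P * Tinv i)) = P * Tinv i := by
      rw [← mul_assoc, (hTinv (i+1)).2, one_mul]
    have e2 : T (i+1) * (P * Tinv i) = P * (T i * Tinv i) := by
      rw [← mul_assoc, ← hPT i, mul_assoc]
    rw [e2, (hTinv i).1, mul_one] at e1
    exact e1.symm
  -- commutation transfer to inverses
  have hTinvComm : ∀ x y : ZMod m, T x * T y = T y * T x →
      Tinv x * Tinv y = Tinv y * Tinv x := by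
    intro x y hcom
    have h1 : Tinv y * T x = T x * Tinv y := by
      have e1 : Tinv y * (T x * (T y * Tinv y)) = Tinv y * T x := by
        rw [(hTinv y).1, mul_one]
      have e2 : T x * (T y * Tinv y) = T y * (T x * Tinv y) := by
        rw [← mul_assoc, hcom, mul_assoc]
      rw [e2, ← mul_assoc, (hTinv y).2, one_mul] at e1
      exact e1.symm
    have h2 : Tinv x * ((Tinv y * T x) * Tinv x) = Tinv x * Tinv y := by
      rw [mul_assoc (Tinv y), (hTinv x).1, mul_one]
    rw [h1, ← mul_assoc, ← mul_assoc, (hTinv x).2, one_mul] at h2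
    exact h2.symm
  -- braid transfer to inverses
  have hbrT : ∀ x : ZMod m, 2 < m →
      Tinv x * Tinv (x+1) * T x = T (x+1) * (Tinv x * Tinv (x+1)) := by
    intro x hm2
    have hb := hbraid hm2 x
    have e1 : Tinv (x+1) * (T x * T (x+1)) = T x * T (x+1) * Tinv x := by
      have f1 : Tinv (x+1) * (T x * T (x+1) * T x) * Tinv x
          = Tinv (x+1) * (T x * T (x+1)) := by
        rw [mul_assoc (Tinv (x+1)) _ (Tinv x), mul_assoc _ (T x) (Tinv x),
          (hTinv x).1, mul_one]
      rw [hb] at f1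
      rw [← mul_assoc, ← mul_assoc, (hTinv (x+1)).2, one_mul] at f1
      exact f1.symm
    calc Tinv x * Tinv (x+1) * T x
        = Tinv x * Tinv (x+1) * T x * (T (x+1) * Tinv (x+1)) := by
          rw [(hTinv (x+1)).1, mul_one]
      _ = Tinv x * (Tinv (x+1) * (T x * T (x+1))) * Tinv (x+1) := by
          simp only [mul_assoc]
      _ = Tinv x * (T x * T (x+1) * Tinv x) * Tinv (x+1) := by rw [e1]
      _ = (Tinv x * T x) * (T (x+1) * (Tinv x * Tinv (x+1))) := by
          simp only [mul_assoc]
      _ = T (x+1) * (Tinv x * Tinv (x+1)) := by rw [(hTinv x).2, one_mul]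
  -- distinctness of casts
  have key_ne : ∀ u v : ℕ, 0 < u → u < m → v ≤ m → u ≠ v →
      ((u : ZMod m) ≠ (v : ZMod m)) := by
    intro u v hu hum hvm huv h
    rcases Nat.lt_or_ge v m with hv | hv
    · have h1 : ZMod.val ((u : ℕ) : ZMod m) = u := ZMod.val_natCast_of_lt hum
      have h2 : ZMod.val ((v : ℕ) : ZMod m) = v := ZMod.val_natCast_of_lt hv
      rw [h] at h1
      omega
    · have hvm2 : v = m := by omega
      rw [hvm2, ZMod.natCast_self] at h
      have h1 : ZMod.val ((u : ℕ) : ZMod m) = u := ZMod.val_natCast_of_lt hum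
      rw [h, ZMod.val_zero] at h1
      omega
  set U : ℕ → A := fun i => Tinv (i : ZMod m) with hU
  set V : ℕ → A := fun i => T (i : ZMod m) with hV
  have hUVk : ∀ i : ℕ, U i * V i = 1 := by
    intro i; simp only [hU, hV]; exact (hTinv _).2
  have hL0k : ∀ i : ℕ, 1 ≤ i → i ≤ a+1 → τ * U i = V i - τ + 1 := by
    intro i _ _; simp only [hU, hV]; exact hq _
  have hbrN : ∀ i : ℕ, 1 ≤ i → i + 1 ≤ a + 1 →
      U i * U (i+1) * V i = V (i+1) * (U i * U (i+1)) := by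
    intro i h1 h2
    have hm2 : 2 < m := by omega
    have hcast : (((i+1 : ℕ)) : ZMod m) = ((i : ℕ) : ZMod m) + 1 := by push_cast; ring
    simp only [hU, hV]
    rw [hcast]
    exact hbrT _ hm2
  have hcmN : ∀ i j : ℕ, 1 ≤ i → i + 2 ≤ j → j ≤ a + 1 → U i * U j = U j * U i := by
    intro i j h1 h2 h3
    have ne1 : ((j : ℕ) : ZMod m) ≠ ((i : ℕ) : ZMod m) + 1 := by
      have hc : ((i : ℕ) : ZMod m) + 1 = (((i+1 : ℕ)) : ZMod m) := by push_cast; ring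
      rw [hc]
      exact key_ne j (i+1) (by omega) (by omega) (by omega) (by omega)
    have ne2 : ((i : ℕ) : ZMod m) ≠ ((j : ℕ) : ZMod m) + 1 := by
      have hc : ((j : ℕ) : ZMod m) + 1 = (((j+1 : ℕ)) : ZMod m) := by push_cast; ring
      rw [hc]
      exact key_ne i (j+1) (by omega) (by omega) (by omega) (by omega)
    have hTc := hcommT _ _ ne1 ne2
    simp only [hU]
    exact hTinvComm _ _ hTc
  -- identify c with chains
  have hcCh : ∀ j : ℕ, c j = hecCh U 1 j := by
    intro j
    induction j with
    | zero => rw [hc0, hecCh_zero]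
    | succ j ihj =>
        rw [hcS j, ihj, hecCh_succ U 1 j, Nat.add_comm 1 j]
  have hsum : ∀ k : ℕ, (∑ j ∈ Finset.range (k + 1), c j) = hecEE U 1 k := by
    intro k
    unfold hecEE
    exact Finset.sum_congr rfl (fun j _ => hcCh j)
  -- P through chains
  have hPCh : ∀ j : ℕ, P * hecCh U 1 j = hecCh U 2 j * P := by
    intro j
    induction j with
    | zero => simp
    | succ j ihj =>
        have hPUj : P * U (1+j) = U (2+j) * P := by
          simp only [hU]
          have hc2 : (((1+j : ℕ)) : ZMod m) + 1 = (((2+j : ℕ)) : ZMod m) := by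
            push_cast; ring
          rw [hPU (((1+j : ℕ)) : ZMod m), hc2]
        rw [hecCh_succ, hecCh_succ, ← mul_assoc, hPUj, mul_assoc, ihj, ← mul_assoc]
  have hPE : P * hecEE U 1 a = hecEE U 2 a * P := by
    unfold hecEE
    rw [Finset.mul_sum, Finset.sum_mul]
    exact Finset.sum_congr rfl (fun j _ => hPCh j)
  -- the factor rewrite
  have hfac : (1 : A) - τ * Tinv (((m - 1 : ℕ) : ZMod m))
      = τ - T (((m - 1 : ℕ) : ZMod m)) := by
    rw [hq]; abel
  have hcast0 : (((m - 1 : ℕ)) : ZMod m) + 1 = 0 := by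
    have h1 : (((m - 1 : ℕ)) : ZMod m) + 1 = (((m - 1 + 1 : ℕ)) : ZMod m) := by
      push_cast; ring
    rw [h1, show m - 1 + 1 = m by omega, ZMod.natCast_self]
  have h1' : P * (τ - T (((m - 1 : ℕ)) : ZMod m)) = (τ - T 0) * P := by
    rw [mul_sub, hPT, hcast0, sub_mul, hτ P]
  have h2' : P * (τ - T 0) = (τ - T ((1 : ℕ) : ZMod m)) * P := by
    rw [mul_sub, hPT 0, show ((0 : ZMod m) + 1) = ((1 : ℕ) : ZMod m) by simp,
      sub_mul, hτ P]
  have hmid : P * (hecEE U 1 a * (τ - T 0))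
      = hecEE U 2 a * ((τ - T ((1 : ℕ) : ZMod m)) * P) := by
    rw [← mul_assoc, hPE, mul_assoc, h2']
  -- the key identity
  have hz : hecEE U 1 (a+1) * hecEE U 2 a * (τ - T ((1 : ℕ) : ZMod m)) = 0 := by
    have hkey : hecEE U 1 (a+1) * hecEE U 2 a * (V 1 - τ) = 0 := by
      have h := hec_key τ hτ (a+1) V U hUVk hL0k hbrN hcmN a 1 (le_refl 1) (by omega)
      simpa only [show (1+1 : ℕ) = 2 from rfl] using h
    have hV1 : V 1 = T ((1 : ℕ) : ZMod m) := by simp only [hV]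
    rw [hV1] at hkey
    have hneg : τ - T ((1 : ℕ) : ZMod m) = -(T ((1 : ℕ) : ZMod m) - τ) := by abel
    rw [hneg, mul_neg, hkey, neg_zero]
  -- assemble
  rw [hSh (a+1), hSh a, hsum (a+1), hsum a, hfac]
  simp only [mul_assoc]
  rw [h1']
  rw [← mul_assoc (hecEE U 1 a) (τ - T 0) P]
  rw [← mul_assoc P (hecEE U 1 a * (τ - T 0)) P]
  rw [hmid]
  simp only [← mul_assoc]
  rw [hz, zero_mul, zero_mul]
end

section
/- Let F be an element of a module over the affine Hecke algebra H_m satisfying T_{m-1}·F = t·F. Then for any 0 ≤ a < m-1, (1+t)·Ŝ_a·Ŝ_a·F = t·Ŝ_{a+1}·Ŝ_a·F + Ŝ_a·Ŝ_{a-1}·F, where Ŝ_a = (1 + T_1^{-1} + ... + T_a^{-1}···T_1^{-1})·Π for a ≥ 0 and Ŝ_{-1} = 0. -/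
set_option maxHeartbeats 1000000
set_option synthInstance.maxHeartbeats 400000

open MvPolynomial

section Aux

variable {m : ℕ} {A : Type*} [Ring A]

/-- Ascending product `T s * T (s+1) * ⋯ * T (s+k-1)`. -/
def gp (T : ZMod m → A) (s : ℕ) : ℕ → A
  | 0 => 1
  | k + 1 => gp T s k * T ((s + k : ℕ) : ZMod m)

@[simp] lemma gp_zero (T : ZMod m → A) (s : ℕ) : gp T s 0 = 1 := rfl

lemma gp_succ (T : ZMod m → A) (s k : ℕ) :
    gp T s (k + 1) = gp T s k * T ((s + k : ℕ) : ZMod m) := rfl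

lemma gp_split (T : ZMod m → A) (s k l : ℕ) :
    gp T s (k + l) = gp T s k * gp T (s + k) l := by
  induction l with
  | zero => simp
  | succ l ih =>
      have e : s + (k + l) = s + k + l := by omega
      calc gp T s (k + (l + 1)) = gp T s (k + l) * T ((s + (k + l) : ℕ) : ZMod m) := gp_succ T s (k + l)
        _ = (gp T s k * gp T (s + k) l) * T ((s + k + l : ℕ) : ZMod m) := by rw [ih, e]
        _ = gp T s k * gp T (s + k) (l + 1) := by rw [gp_succ, mul_assoc]

lemma gp_cons (T : ZMod m → A) (s k : ℕ) :
    gp T s (k + 1) = T ((s : ℕ) : ZMod m) * gp T (s + 1) k := by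
  have : k + 1 = 1 + k := by omega
  rw [this, gp_split]
  simp [gp_succ]

lemma gp_comm (T : ZMod m → A) (s k t : ℕ)
    (h : ∀ l < k, T ((s + l : ℕ) : ZMod m) * T ((t : ℕ) : ZMod m)
      = T ((t : ℕ) : ZMod m) * T ((s + l : ℕ) : ZMod m)) :
    gp T s k * T ((t : ℕ) : ZMod m) = T ((t : ℕ) : ZMod m) * gp T s k := by
  induction k with
  | zero => simp
  | succ k ih =>
      rw [gp_succ, mul_assoc, h k (by omega), ← mul_assoc,
        ih (fun l hl => h l (by omega)), mul_assoc]

lemma castne {i j : ℕ} (hi : i < m) (hj : j < m) (h : i ≠ j) :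
    (i : ZMod m) ≠ (j : ZMod m) := by
  haveI : NeZero m := ⟨by omega⟩
  intro he
  exact h (by rw [← ZMod.val_natCast_of_lt hi, ← ZMod.val_natCast_of_lt hj, he])

/-- The key braid-word identity:
`T 1 * (T 2 ⋯ T (a+1)) * (T 1 ⋯ T j) = (T 2 ⋯ T (j+1)) * (T 1 ⋯ T (a+1))`. -/
lemma word (T : ZMod m → A)
    (hb : ∀ i : ℕ, 1 ≤ i → i + 1 < m →
      T ((i : ℕ) : ZMod m) * T ((i + 1 : ℕ) : ZMod m) * T ((i : ℕ) : ZMod m)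
        = T ((i + 1 : ℕ) : ZMod m) * T ((i : ℕ) : ZMod m) * T ((i + 1 : ℕ) : ZMod m))
    (hc : ∀ i j : ℕ, 1 ≤ i → j < m → i + 2 ≤ j →
      T ((i : ℕ) : ZMod m) * T ((j : ℕ) : ZMod m)
        = T ((j : ℕ) : ZMod m) * T ((i : ℕ) : ZMod m))
    (a : ℕ) (ham : a + 1 < m) :
    ∀ j, j ≤ a → T ((1 : ℕ) : ZMod m) * gp T 2 a * gp T 1 j
      = gp T 2 j * gp T 1 (a + 1) := by
  intro j
  induction j with
  | zero =>
      intro _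
      rw [gp_zero, mul_one, gp_zero, one_mul, gp_cons]
  | succ j ih =>
      intro hj
      have IH := ih (by omega)
      obtain ⟨b, hab⟩ : ∃ b, a = j + 1 + b := ⟨a - 1 - j, by omega⟩
      have hdecomp : gp T 1 (a + 1)
          = gp T 1 j * (T ((j + 1 : ℕ) : ZMod m) * (T ((j + 2 : ℕ) : ZMod m) * gp T (j + 3) b)) := by
        have e : a + 1 = (j + 2) + b := by omega
        rw [e, gp_split]
        have e1 : gp T 1 (j + 2) = gp T 1 j * T ((1 + j : ℕ) : ZMod m) * T ((1 + (j + 1) : ℕ) : ZMod m) := by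
          rw [gp_succ, gp_succ]
        rw [e1]
        have e2 : (1 : ℕ) + j = j + 1 := by omega
        have e3 : (1 : ℕ) + (j + 1) = j + 2 := by omega
        have e4 : (1 : ℕ) + (j + 2) = j + 3 := by omega
        rw [e2, e3, e4]
        simp only [mul_assoc]
      -- commute `T (j+1)` with `gp T (j+3) b`
      have f1 : gp T (j + 3) b * T ((j + 1 : ℕ) : ZMod m)
          = T ((j + 1 : ℕ) : ZMod m) * gp T (j + 3) b := by
        apply gp_comm
        intro l hl
        exact (hc (j + 1) (j + 3 + l) (by omega) (by omega) (by omega)).symm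
      -- braid relation at j+1
      have f2 : T ((j + 1 : ℕ) : ZMod m) * T ((j + 2 : ℕ) : ZMod m) * T ((j + 1 : ℕ) : ZMod m)
          = T ((j + 2 : ℕ) : ZMod m) * T ((j + 1 : ℕ) : ZMod m) * T ((j + 2 : ℕ) : ZMod m) := by
        have := hb (j + 1) (by omega) (by omega)
        have e : j + 1 + 1 = j + 2 := by omega
        rwa [e] at this
      -- commute `T (j+2)` with `gp T 1 j`
      have f3 : gp T 1 j * T ((j + 2 : ℕ) : ZMod m)
          = T ((j + 2 : ℕ) : ZMod m) * gp T 1 j := by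
        apply gp_comm
        intro l hl
        exact hc (1 + l) (j + 2) (by omega) (by omega) (by omega)
      have f1x : ∀ x : A, gp T (j + 3) b * (T ((j + 1 : ℕ) : ZMod m) * x)
          = T ((j + 1 : ℕ) : ZMod m) * (gp T (j + 3) b * x) := by
        intro x; rw [← mul_assoc, f1, mul_assoc]
      have f2x : ∀ x : A, T ((j + 1 : ℕ) : ZMod m) * (T ((j + 2 : ℕ) : ZMod m) *
            (T ((j + 1 : ℕ) : ZMod m) * x))
          = T ((j + 2 : ℕ) : ZMod m) * (T ((j + 1 : ℕ) : ZMod m) *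
            (T ((j + 2 : ℕ) : ZMod m) * x)) := by
        intro x
        simp only [← mul_assoc]
        rw [f2]
      have f3x : ∀ x : A, gp T 1 j * (T ((j + 2 : ℕ) : ZMod m) * x)
          = T ((j + 2 : ℕ) : ZMod m) * (gp T 1 j * x) := by
        intro x; rw [← mul_assoc, f3, mul_assoc]
      -- main step : gp T 1 (a+1) * T (j+1) = T (j+2) * gp T 1 (a+1)
      have h1 : gp T 1 (a + 1) * T ((j + 1 : ℕ) : ZMod m)
          = T ((j + 2 : ℕ) : ZMod m) * gp T 1 (a + 1) := by
        rw [hdecomp]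
        simp only [mul_assoc]
        rw [f1, f2x, ← f3x]
      have e5 : gp T 1 (j + 1) = gp T 1 j * T ((j + 1 : ℕ) : ZMod m) := by
        have e : (1 : ℕ) + j = j + 1 := by omega
        rw [gp_succ, e]
      have e6 : gp T 2 (j + 1) = gp T 2 j * T ((j + 2 : ℕ) : ZMod m) := by
        have e : (2 : ℕ) + j = j + 2 := by omega
        rw [gp_succ, e]
      calc T ((1 : ℕ) : ZMod m) * gp T 2 a * gp T 1 (j + 1)
          = (T ((1 : ℕ) : ZMod m) * gp T 2 a * gp T 1 j) * T ((j + 1 : ℕ) : ZMod m) := by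
            rw [e5, ← mul_assoc]
        _ = gp T 2 j * (gp T 1 (a + 1) * T ((j + 1 : ℕ) : ZMod m)) := by
            rw [IH, mul_assoc]
        _ = gp T 2 j * (T ((j + 2 : ℕ) : ZMod m) * gp T 1 (a + 1)) := by rw [h1]
        _ = gp T 2 (j + 1) * gp T 1 (a + 1) := by rw [e6, mul_assoc]

/-- Products of inverses: `dd Tinv j = Tinv (j+1) * ⋯ * Tinv 2`. -/
def dd (Tinv : ZMod m → A) : ℕ → A
  | 0 => 1
  | j + 1 => Tinv ((j + 2 : ℕ) : ZMod m) * dd Tinv j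

@[simp] lemma dd_zero (Tinv : ZMod m → A) : dd Tinv 0 = 1 := rfl

lemma dd_succ (Tinv : ZMod m → A) (j : ℕ) :
    dd Tinv (j + 1) = Tinv ((j + 2 : ℕ) : ZMod m) * dd Tinv j := rfl

end Aux

/-- if `F` is an element of a module over the affine Hecke
algebra satisfying `T_{m-1} F = t F`, then for `0 ≤ a < m - 1` one has
`(1+t) Ŝ_a Ŝ_a F = t Ŝ_{a+1} Ŝ_a F + Ŝ_a Ŝ_{a-1} F`, with `Ŝ_{-1} = 0`. -/
theorem stmt_9 (m : ℕ) (hm : 0 < m)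
    (A : Type*) [Ring A] [Algebra K2 A]
    (T Tinv : ZMod m → A) (P Pinv : A)
    (hTinv : ∀ i, T i * Tinv i = 1 ∧ Tinv i * T i = 1)
    (hquad : ∀ i, (T i - algebraMap K2 A tt) * (T i + 1) = 0)
    (hbraid : 2 < m → ∀ i, T i * T (i + 1) * T i = T (i + 1) * T i * T (i + 1))
    (hcommT : ∀ i j : ZMod m, j ≠ i + 1 → i ≠ j + 1 → T i * T j = T j * T i)
    (hP : P * Pinv = 1 ∧ Pinv * P = 1)
    (hPT : ∀ i, P * T i = T (i + 1) * P)
    (c : ℕ → A) (hc0 : c 0 = 1)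
    (hcS : ∀ j : ℕ, c (j + 1) = Tinv (((j : ℕ) + 1 : ℕ) : ZMod m) * c j)
    (Sh : ℤ → A)
    (hShneg : ∀ a : ℤ, a < 0 → Sh a = 0)
    (hSh : ∀ a : ℕ, Sh a = (∑ j ∈ Finset.range (a + 1), c j) * P)
    (M : Type*) [AddCommGroup M] [Module A M]
    (F : M)
    (hF : T (((m - 1 : ℕ) : ZMod m)) • F = (algebraMap K2 A tt) • F)
    (a : ℤ) (ha0 : 0 ≤ a) (ham : a + 1 < (m : ℤ)) :
    ((1 + algebraMap K2 A tt) * (Sh a * Sh a)) • F =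
      (algebraMap K2 A tt * (Sh (a + 1) * Sh a)) • F +
        (Sh a * Sh (a - 1)) • F := by
  lift a to ℕ using ha0 with aN
  have hmN : aN + 2 ≤ m := by exact_mod_cast ham
  set τ : A := algebraMap K2 A tt with hτdef
  have hτ : ∀ x : A, τ * x = x * τ := fun x => Algebra.commutes tt x
  -- braid / commutation in ℕ-indexed form
  have hb : ∀ i : ℕ, 1 ≤ i → i + 1 < m →
      T ((i : ℕ) : ZMod m) * T ((i + 1 : ℕ) : ZMod m) * T ((i : ℕ) : ZMod m)
        = T ((i + 1 : ℕ) : ZMod m) * T ((i : ℕ) : ZMod m) * T ((i + 1 : ℕ) : ZMod m) := by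
    intro i h1 h2
    have h3 : 2 < m := by omega
    have hcast : ((i : ℕ) : ZMod m) + 1 = ((i + 1 : ℕ) : ZMod m) := by push_cast; ring
    have := hbraid h3 ((i : ℕ) : ZMod m)
    rwa [hcast] at this
  have hc : ∀ i j : ℕ, 1 ≤ i → j < m → i + 2 ≤ j →
      T ((i : ℕ) : ZMod m) * T ((j : ℕ) : ZMod m)
        = T ((j : ℕ) : ZMod m) * T ((i : ℕ) : ZMod m) := by
    intro i j h1 h2 h3
    apply hcommT
    · have e : ((i : ℕ) : ZMod m) + 1 = ((i + 1 : ℕ) : ZMod m) := by push_cast; ring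
      rw [e]
      exact castne h2 (by omega) (by omega)
    · have e : ((j : ℕ) : ZMod m) + 1 = ((j + 1 : ℕ) : ZMod m) := by push_cast; ring
      rw [e]
      rcases Nat.lt_or_ge (j + 1) m with hcase | hcase
      · exact castne (by omega) hcase (by omega)
      · have hjm : j + 1 = m := by omega
        have e0 : ((j + 1 : ℕ) : ZMod m) = ((0 : ℕ) : ZMod m) := by
          rw [hjm]; simp
        rw [e0]
        exact castne (by omega) (by omega) (by omega)
  -- inverses of ascending products
  have hTc : ∀ j : ℕ, gp T 1 j * c j = 1 ∧ c j * gp T 1 j = 1 := by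
    intro j
    induction j with
    | zero => simp [hc0]
    | succ j ih =>
        have e : (1 : ℕ) + j = j + 1 := by omega
        have hg : gp T 1 (j + 1) = gp T 1 j * T ((j + 1 : ℕ) : ZMod m) := by
          rw [gp_succ, e]
        constructor
        · rw [hg, hcS j, mul_assoc, ← mul_assoc (T ((j + 1 : ℕ) : ZMod m)),
            (hTinv _).1, one_mul, ih.1]
        · rw [hg, hcS j, mul_assoc, ← mul_assoc (c j), ih.2, one_mul, (hTinv _).2]
  have hTd : ∀ j : ℕ, gp T 2 j * dd Tinv j = 1 ∧ dd Tinv j * gp T 2 j = 1 := by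
    intro j
    induction j with
    | zero => simp
    | succ j ih =>
        have e : (2 : ℕ) + j = j + 2 := by omega
        have hg : gp T 2 (j + 1) = gp T 2 j * T ((j + 2 : ℕ) : ZMod m) := by
          rw [gp_succ, e]
        constructor
        · rw [hg, dd_succ, mul_assoc, ← mul_assoc (T ((j + 2 : ℕ) : ZMod m)),
            (hTinv _).1, one_mul, ih.1]
        · rw [hg, dd_succ, mul_assoc, ← mul_assoc (dd Tinv j), ih.2, one_mul, (hTinv _).2]
  -- `P` conjugates `c j` into `dd j`
  have hPTinv : ∀ i : ZMod m, P * Tinv i = Tinv (i + 1) * P := by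
    intro i
    calc P * Tinv i
        = (Tinv (i + 1) * T (i + 1)) * (P * Tinv i) := by rw [(hTinv (i + 1)).2, one_mul]
      _ = Tinv (i + 1) * (T (i + 1) * (P * Tinv i)) := by simp only [mul_assoc]
      _ = Tinv (i + 1) * ((T (i + 1) * P) * Tinv i) := by rw [mul_assoc]
      _ = Tinv (i + 1) * ((P * T i) * Tinv i) := by rw [hPT i]
      _ = Tinv (i + 1) * (P * (T i * Tinv i)) := by rw [mul_assoc]
      _ = Tinv (i + 1) * P := by rw [(hTinv i).1, mul_one]
  have hPc : ∀ j : ℕ, P * c j = dd Tinv j * P := by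
    intro j
    induction j with
    | zero => simp [hc0]
    | succ j ih =>
        have e : ((j + 1 : ℕ) : ZMod m) + 1 = ((j + 2 : ℕ) : ZMod m) := by push_cast; ring
        calc P * c (j + 1) = (P * Tinv ((j + 1 : ℕ) : ZMod m)) * c j := by
              rw [hcS j, ← mul_assoc]
          _ = Tinv ((j + 2 : ℕ) : ZMod m) * (P * c j) := by
              rw [hPTinv, e, mul_assoc]
          _ = dd Tinv (j + 1) * P := by rw [ih, dd_succ, mul_assoc]
  -- the key algebraic identity
  have key : ∀ j : ℕ, j ≤ aN →
      c j * dd Tinv aN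
        = Tinv ((aN + 1 : ℕ) : ZMod m) * (c aN * (dd Tinv j * T ((1 : ℕ) : ZMod m))) := by
    intro j hj
    have W := word T hb hc aN (by omega) j hj
    have hone : (c (aN + 1) * dd Tinv j) * (gp T 2 j * gp T 1 (aN + 1)) = 1 := by
      calc (c (aN + 1) * dd Tinv j) * (gp T 2 j * gp T 1 (aN + 1))
          = c (aN + 1) * ((dd Tinv j * gp T 2 j) * gp T 1 (aN + 1)) := by
            simp only [mul_assoc]
        _ = c (aN + 1) * gp T 1 (aN + 1) := by rw [(hTd j).2, one_mul]
        _ = 1 := (hTc (aN + 1)).2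
    calc c j * dd Tinv aN
        = (c (aN + 1) * dd Tinv j) * ((gp T 2 j * gp T 1 (aN + 1)) * (c j * dd Tinv aN)) := by
          rw [← mul_assoc, hone, one_mul]
      _ = (c (aN + 1) * dd Tinv j) * ((T ((1 : ℕ) : ZMod m) * gp T 2 aN * gp T 1 j) * (c j * dd Tinv aN)) := by
          rw [W]
      _ = (c (aN + 1) * dd Tinv j) * (T ((1 : ℕ) : ZMod m) * (gp T 2 aN * ((gp T 1 j * c j) * dd Tinv aN))) := by
          simp only [mul_assoc]
      _ = (c (aN + 1) * dd Tinv j) * T ((1 : ℕ) : ZMod m) := by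
          rw [(hTc j).1, one_mul, (hTd aN).1, mul_one]
      _ = Tinv ((aN + 1 : ℕ) : ZMod m) * (c aN * (dd Tinv j * T ((1 : ℕ) : ZMod m))) := by
          rw [hcS aN]
          simp only [mul_assoc]
  -- eigenvector property transported through `P * P`
  set G : M := (P * P) • F with hGdef
  have hPP : T ((1 : ℕ) : ZMod m) * (P * P) = (P * P) * T ((m - 1 : ℕ) : ZMod m) := by
    have em : ((m - 1 : ℕ) : ZMod m) = -1 := by
      have h1 : ((m - 1 : ℕ) : ZMod m) + 1 = 0 := by
        have e2 : ((m - 1 : ℕ) : ZMod m) + 1 = ((m - 1 + 1 : ℕ) : ZMod m) := by push_cast; ring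
        have e3 : m - 1 + 1 = m := by omega
        rw [e2, e3, ZMod.natCast_self]
      exact eq_neg_of_add_eq_zero_left h1
    have e1 : ((1 : ℕ) : ZMod m) = (0 : ZMod m) + 1 := by push_cast; ring
    calc T ((1 : ℕ) : ZMod m) * (P * P)
        = (T ((0 : ZMod m) + 1) * P) * P := by rw [e1, mul_assoc]
      _ = (P * T 0) * P := by rw [← hPT 0]
      _ = P * (T ((-1 : ZMod m) + 1) * P) := by rw [mul_assoc]; norm_num
      _ = P * (P * T (-1)) := by rw [← hPT (-1)]
      _ = (P * P) * T ((m - 1 : ℕ) : ZMod m) := by rw [em, mul_assoc]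
  have hG : T ((1 : ℕ) : ZMod m) • G = τ • G := by
    rw [hGdef, ← mul_smul, hPP, mul_smul, hF, ← mul_smul, ← hτ, mul_smul]
  -- termwise identity on G
  have hterm : ∀ j : ℕ, j ≤ aN →
      (c j * dd Tinv aN) • G
        = (τ * (Tinv ((aN + 1 : ℕ) : ZMod m) * (c aN * dd Tinv j))) • G := by
    intro j hj
    rw [key j hj]
    have e : Tinv ((aN + 1 : ℕ) : ZMod m) * (c aN * (dd Tinv j * T ((1 : ℕ) : ZMod m)))
        = (Tinv ((aN + 1 : ℕ) : ZMod m) * (c aN * dd Tinv j)) * T ((1 : ℕ) : ZMod m) := by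
      simp only [mul_assoc]
    rw [e, mul_smul, hG, ← mul_smul, ← hτ]
  -- sums
  have hmain : ((∑ j ∈ Finset.range (aN + 1), c j) * dd Tinv aN) • G
      = (τ * (Tinv ((aN + 1 : ℕ) : ZMod m) * (c aN * ∑ j ∈ Finset.range (aN + 1), dd Tinv j))) • G := by
    rw [Finset.sum_mul, Finset.sum_smul]
    have h1 : ∀ j ∈ Finset.range (aN + 1),
        (c j * dd Tinv aN) • G
          = (τ * (Tinv ((aN + 1 : ℕ) : ZMod m) * (c aN * dd Tinv j))) • G := by
      intro j hj
      exact hterm j (Finset.mem_range_succ_iff.mp hj)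
    rw [Finset.sum_congr rfl h1, ← Finset.sum_smul]
    congr 1
    rw [Finset.mul_sum, Finset.mul_sum, Finset.mul_sum]
  have hPC : P * (∑ j ∈ Finset.range (aN + 1), c j)
      = (∑ j ∈ Finset.range (aN + 1), dd Tinv j) * P := by
    rw [Finset.mul_sum, Finset.sum_mul]
    exact Finset.sum_congr rfl fun j _ => hPc j
  -- the crucial module identity
  set C : A := ∑ j ∈ Finset.range (aN + 1), c j with hCdef
  set D : A := ∑ j ∈ Finset.range (aN + 1), dd Tinv j with hDdef
  have hcruc : ((C * P) * (c aN * P)) • F = (τ * ((c (aN + 1) * P) * (C * P))) • F := by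
    have e1 : (C * P) * (c aN * P) = (C * dd Tinv aN) * (P * P) := by
      calc (C * P) * (c aN * P) = C * ((P * c aN) * P) := by simp only [mul_assoc]
        _ = C * ((dd Tinv aN * P) * P) := by rw [hPc aN]
        _ = (C * dd Tinv aN) * (P * P) := by simp only [mul_assoc]
    have hPC2 : P * (C * P) = D * (P * P) := by
      rw [← mul_assoc, hPC, mul_assoc]
    have e2 : τ * ((c (aN + 1) * P) * (C * P))
        = (τ * (Tinv ((aN + 1 : ℕ) : ZMod m) * (c aN * D))) * (P * P) := by
      rw [hcS aN]
      simp only [mul_assoc]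
      rw [hPC2]
    have hsm : ∀ x : A, (x * (P * P)) • F = x • G := by
      intro x; rw [mul_smul, ← hGdef]
    rw [e1, e2, hsm, hsm]
    exact hmain
  -- rewrite the `Sh` values
  have hS0 : Sh ((aN : ℤ)) = C * P := hSh aN
  have hSp : Sh ((aN : ℤ) + 1) = C * P + c (aN + 1) * P := by
    have e : ((aN : ℤ) + 1) = ((aN + 1 : ℕ) : ℤ) := by push_cast; ring
    rw [e, hSh (aN + 1), Finset.sum_range_succ, add_mul, hCdef]
  have hSm : Sh ((aN : ℤ) - 1) = C * P - c aN * P := by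
    cases aN with
    | zero =>
        have e : ((0 : ℕ) : ℤ) - 1 = (-1 : ℤ) := by norm_num
        rw [e, hShneg (-1) (by norm_num), hCdef]
        simp [Finset.sum_range_one]
    | succ b =>
        have e : ((b + 1 : ℕ) : ℤ) - 1 = ((b : ℕ) : ℤ) := by push_cast; ring
        rw [e, hSh b, hCdef]
        have hs : (∑ j ∈ Finset.range (b + 1 + 1), c j)
            = (∑ j ∈ Finset.range (b + 1), c j) + c (b + 1) := Finset.sum_range_succ c (b + 1)
        rw [hs, add_mul]
        abel
  rw [hS0, hSp, hSm]
  have hEq : (1 + τ) * ((C * P) * (C * P)) + τ * ((c (aN + 1) * P) * (C * P))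
      = (τ * ((C * P + c (aN + 1) * P) * (C * P))
          + ((C * P) * (C * P - c aN * P))) + (C * P) * (c aN * P) := by
    noncomm_ring
  have h2 := congrArg (fun z : A => z • F) hEq
  simp only [add_smul] at h2
  rw [hcruc] at h2
  exact add_right_cancel h2
end

section
/- For any partition λ = (λ_1,...,λ_l) of n, the limit as q → ∞ of the (q,t)-elementary symmetric function e_λ^{(q,t)}(X) = e_{λ_1}(X) ⋆ ··· ⋆ e_{λ_l}(X) equals ([n]_t! / ∏_{i=1}^l [λ_i]_t!) · e_n(X). -/
/-- `ℚ(t)`. -/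
abbrev Kt := RatFunc ℚ

/-- `A = ℚ(t)[q⁻¹]`: polynomials in the variable `u = q⁻¹` over `ℚ(t)`. -/
abbrev Aq := Polynomial Kt

/-- The parameter `t`, viewed in `A`. -/
noncomputable def tA : Aq := Polynomial.C RatFunc.X

/-- The `t`-factorial `[r]_t! = ∏_{j=1}^r (1 + t + ⋯ + t^{j-1}) ∈ ℚ(t)`. -/
noncomputable def tfac (r : ℕ) : Kt :=
  ∏ j ∈ Finset.range r, ∑ i ∈ Finset.range (j + 1), RatFunc.X ^ i

/-- for a partition `λ = (λ_1 ≥ … ≥ λ_l) ⊢ n`, the limit as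
`q → ∞` of `e_λ^{(q,t)} = e_{λ_1} ⋆ ⋯ ⋆ e_{λ_l}` equals
`([n]_t!/∏_i [λ_i]_t!) e_n`, i.e.
`e_λ^{(q,t)} ≡ ([n]_t!/∏ [λ_i]_t!) e_n` modulo `q⁻¹`.  Here `Λ` is the ring of
symmetric functions over `ℚ(t)[q⁻¹]` and `⋆` is the quantum multiplication,
satisfying the Pieri rule
`e_1 ⋆ e_r = (1-q⁻¹)[r+1]_t e_{r+1} + q⁻¹ e_1 e_r`. -/
theorem stmt_12 (Λ : Type*) [CommRing Λ] [Algebra Aq Λ]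
    (e : ℕ → Λ) (star : Λ → Λ → Λ)
    (hcomm : ∀ x y, star x y = star y x)
    (hassoc : ∀ x y z, star (star x y) z = star x (star y z))
    (hone : ∀ x, star 1 x = x)
    (haddr : ∀ x y z, star x (y + z) = star x y + star x z)
    (hsmulr : ∀ (a : Aq) (x y : Λ), star x (a • y) = a • star x y)
    (he0 : e 0 = 1)
    (hPieri : ∀ r : ℕ, star (e 1) (e r) =
      ((1 - Polynomial.X) * ∑ j ∈ Finset.range (r + 1), tA ^ j) • e (r + 1) +
        (Polynomial.X : Aq) • (e 1 * e r))
    (l n : ℕ) (lam : Fin l → ℕ) (hpos : ∀ i, 0 < lam i)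
    (hanti : Antitone lam) (hsum : ∑ i, lam i = n) :
    (List.ofFn lam).foldr (fun a b => star (e a) b) 1 -
        (Polynomial.C (tfac n / ∏ i, tfac (lam i)) : Aq) • e n ∈
      Ideal.span {(algebraMap Aq Λ) Polynomial.X} := by
  classical
  set I : Ideal Λ := Ideal.span {(algebraMap Aq Λ) Polynomial.X} with hIdef
  -- basic membership facts
  have hXsmul : ∀ z : Λ, (Polynomial.X : Aq) • z ∈ I := by
    intro z
    rw [hIdef, Ideal.mem_span_singleton, Algebra.smul_def]
    exact Dvd.intro z rfl
  have hsmulmem : ∀ (a : Aq) (z : Λ), z ∈ I → a • z ∈ I := by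
    intro a z hz
    rw [Algebra.smul_def]
    exact Ideal.mul_mem_left _ _ hz
  have hstarsub : ∀ x y z : Λ, star x (y - z) = star x y - star x z := by
    intro x y z
    have h := haddr x (y - z) z
    rw [sub_add_cancel] at h
    exact eq_sub_of_add_eq h.symm
  have hstarmem : ∀ (x z : Λ), z ∈ I → star x z ∈ I := by
    intro x z hz
    rw [hIdef, Ideal.mem_span_singleton] at hz ⊢
    obtain ⟨m, hm⟩ := hz
    refine ⟨star x m, ?_⟩
    rw [hm, ← Algebra.smul_def, hsmulr, Algebra.smul_def]
  have hsmull : ∀ (a : Aq) (x y : Λ), star (a • x) y = a • star x y := by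
    intro a x y; rw [hcomm, hsmulr, hcomm]
  -- the sum of powers of tA is C of the sum of powers of X
  have hsum' : ∀ r : ℕ, (∑ j ∈ Finset.range (r + 1), tA ^ j)
      = (Polynomial.C (∑ i ∈ Finset.range (r + 1), RatFunc.X ^ i) : Aq) := by
    intro r; simp [tA, map_sum, map_pow]
  -- Pieri modulo I
  have hP : ∀ r : ℕ, star (e 1) (e r) -
      (Polynomial.C (∑ i ∈ Finset.range (r + 1), RatFunc.X ^ i) : Aq) • e (r + 1) ∈ I := by
    intro r
    rw [hPieri, hsum' r]
    have heq : ((1 - Polynomial.X) * Polynomial.C (∑ i ∈ Finset.range (r + 1), RatFunc.X ^ i) : Aq) • e (r + 1) +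
        (Polynomial.X : Aq) • (e 1 * e r) -
        (Polynomial.C (∑ i ∈ Finset.range (r + 1), RatFunc.X ^ i) : Aq) • e (r + 1)
        = (Polynomial.X : Aq) • ((e 1 * e r) -
            (Polynomial.C (∑ i ∈ Finset.range (r + 1), RatFunc.X ^ i) : Aq) • e (r + 1)) := by
      rw [sub_mul, one_mul, sub_smul, mul_smul, smul_sub]
      abel
    rw [heq]
    exact hXsmul _
  -- facts about tfac
  have htfac0 : tfac 0 = 1 := by simp [tfac]
  have htfac_succ : ∀ r : ℕ, tfac (r + 1)
      = tfac r * ∑ i ∈ Finset.range (r + 1), RatFunc.X ^ i := by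
    intro r; rw [tfac, Finset.prod_range_succ]; rfl
  have hfactor_ne : ∀ r : ℕ, (∑ i ∈ Finset.range (r + 1), (RatFunc.X : Kt) ^ i) ≠ 0 := by
    intro r
    have : (∑ i ∈ Finset.range (r + 1), (RatFunc.X : Kt) ^ i)
        = algebraMap (Polynomial ℚ) Kt (∑ i ∈ Finset.range (r + 1), Polynomial.X ^ i) := by
      rw [map_sum]
      simp [map_pow, RatFunc.algebraMap_X]
    rw [this]
    apply RatFunc.algebraMap_ne_zero
    intro h
    have h1 := congrArg (Polynomial.eval 1) h
    simp [Polynomial.eval_finset_sum] at h1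
    exact absurd h1 (by positivity)
  have hne : ∀ r : ℕ, tfac r ≠ 0 := by
    intro r
    induction r with
    | zero => rw [htfac0]; exact one_ne_zero
    | succ k ih => rw [htfac_succ]; exact mul_ne_zero ih (hfactor_ne k)
  -- iterated Pieri: e1^{⋆a}(e b) ≡ [a+b]!/[b]! • e_{a+b}
  have hIter : ∀ a b : ℕ, (star (e 1))^[a] (e b)
      - (Polynomial.C (tfac (a + b) / tfac b) : Aq) • e (a + b) ∈ I := by
    intro a b
    induction a with
    | zero =>
      simp only [Function.iterate_zero, id_eq, Nat.zero_add, div_self (hne b), map_one, one_smul,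
        sub_self]
      exact I.zero_mem
    | succ k ih =>
      rw [Function.iterate_succ_apply']
      set c : Kt := tfac (k + b) / tfac b with hc
      set S : Kt := ∑ i ∈ Finset.range (k + b + 1), RatFunc.X ^ i with hS
      have h12 : star (e 1) ((star (e 1))^[k] (e b))
          - star (e 1) ((Polynomial.C c : Aq) • e (k + b)) ∈ I := by
        rw [← hstarsub]; exact hstarmem _ _ ih
      have h23 : star (e 1) ((Polynomial.C c : Aq) • e (k + b))
          - (Polynomial.C c : Aq) • ((Polynomial.C S : Aq) • e (k + b + 1)) ∈ I := by
        rw [hsmulr, ← smul_sub]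
        exact hsmulmem _ _ (hP (k + b))
      have hk : k + 1 + b = k + b + 1 := by omega
      have hcS : (Polynomial.C c : Aq) • ((Polynomial.C S : Aq) • e (k + b + 1))
          = (Polynomial.C (tfac (k + 1 + b) / tfac b) : Aq) • e (k + 1 + b) := by
        have hval : c * S = tfac (k + b + 1) / tfac b := by
          rw [hc, hS, htfac_succ, div_mul_eq_mul_div]
        rw [smul_smul, ← Polynomial.C_mul, hval, hk]
      have hcomb := I.add_mem h12 h23
      rw [sub_add_sub_cancel, hcS] at hcomb
      exact hcomb
  -- conversion: e1^{⋆a} z ≡ [a]! • (e a ⋆ z)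
  have hConv : ∀ (a : ℕ) (z : Λ), (star (e 1))^[a] z
      - (Polynomial.C (tfac a) : Aq) • star (e a) z ∈ I := by
    intro a z
    induction a with
    | zero =>
      simp only [Function.iterate_zero, id_eq, htfac0, map_one, one_smul, he0, hone, sub_self]
      exact I.zero_mem
    | succ k ih =>
      rw [Function.iterate_succ_apply']
      set S : Kt := ∑ i ∈ Finset.range (k + 1), RatFunc.X ^ i with hS
      have h12 : star (e 1) ((star (e 1))^[k] z)
          - star (e 1) ((Polynomial.C (tfac k) : Aq) • star (e k) z) ∈ I := by
        rw [← hstarsub]; exact hstarmem _ _ ih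
      have hassoc' : star (e 1) ((Polynomial.C (tfac k) : Aq) • star (e k) z)
          = (Polynomial.C (tfac k) : Aq) • star (star (e 1) (e k)) z := by
        rw [hsmulr, hassoc]
      have h23 : (Polynomial.C (tfac k) : Aq) • star (star (e 1) (e k)) z
          - (Polynomial.C (tfac k) : Aq) • star ((Polynomial.C S : Aq) • e (k + 1)) z ∈ I := by
        rw [← smul_sub]
        apply hsmulmem
        rw [hcomm, hcomm ((Polynomial.C S : Aq) • e (k + 1)) z, ← hstarsub]
        exact hstarmem _ _ (hP k)
      have hlast : (Polynomial.C (tfac k) : Aq) • star ((Polynomial.C S : Aq) • e (k + 1)) z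
          = (Polynomial.C (tfac (k + 1)) : Aq) • star (e (k + 1)) z := by
        rw [hsmull, smul_smul, ← Polynomial.C_mul, ← htfac_succ]
      have hcomb := I.add_mem h12 (by rw [← hassoc'] at h23; exact h23)
      rw [sub_add_sub_cancel, hlast] at hcomb
      exact hcomb
  -- e_a ⋆ e_b ≡ ([a+b]!/([a]![b]!)) e_{a+b}
  have hEE : ∀ a b : ℕ, star (e a) (e b)
      - (Polynomial.C (tfac (a + b) / (tfac a * tfac b)) : Aq) • e (a + b) ∈ I := by
    intro a b
    have h1 := hConv a (e b)
    have h2 := hIter a b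
    have hdiff : (Polynomial.C (tfac a) : Aq) • star (e a) (e b)
        - (Polynomial.C (tfac (a + b) / tfac b) : Aq) • e (a + b) ∈ I := by
      have := I.sub_mem h2 h1
      have heq : (star (e 1))^[a] (e b) - (Polynomial.C (tfac (a + b) / tfac b) : Aq) • e (a + b)
          - ((star (e 1))^[a] (e b) - (Polynomial.C (tfac a) : Aq) • star (e a) (e b))
          = (Polynomial.C (tfac a) : Aq) • star (e a) (e b)
            - (Polynomial.C (tfac (a + b) / tfac b) : Aq) • e (a + b) := by ring
      rwa [heq] at this
    have h3 := hsmulmem (Polynomial.C (1 / tfac a)) _ hdiff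
    rw [smul_sub, smul_smul, smul_smul, ← Polynomial.C_mul, ← Polynomial.C_mul] at h3
    have e1 : (1 / tfac a) * tfac a = 1 := one_div_mul_cancel (hne a)
    have e2 : (1 / tfac a) * (tfac (a + b) / tfac b) = tfac (a + b) / (tfac a * tfac b) := by
      rw [div_mul_div_comm, one_mul]
    rw [e1, e2, map_one, one_smul] at h3
    exact h3
  -- main list induction
  have hL : ∀ L : List ℕ, L.foldr (fun a b => star (e a) b) 1
      - (Polynomial.C (tfac L.sum / (L.map tfac).prod) : Aq) • e L.sum ∈ I := by
    intro L
    induction L with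
    | nil =>
      simp only [List.foldr_nil, List.sum_nil, List.map_nil, List.prod_nil, htfac0, div_one,
        map_one, one_smul, he0, sub_self]
      exact I.zero_mem
    | cons a L ih =>
      have hpne : (L.map tfac).prod ≠ 0 := by
        apply List.prod_ne_zero
        intro hx
        obtain ⟨r, -, hr⟩ := List.mem_map.mp hx
        exact hne r hr
      set s : ℕ := L.sum with hs
      set p : Kt := (L.map tfac).prod with hp
      have h12 : star (e a) (L.foldr (fun a b => star (e a) b) 1)
          - star (e a) ((Polynomial.C (tfac s / p) : Aq) • e s) ∈ I := by
        rw [← hstarsub]; exact hstarmem _ _ ih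
      have h23 : star (e a) ((Polynomial.C (tfac s / p) : Aq) • e s)
          - (Polynomial.C (tfac s / p) : Aq) •
            ((Polynomial.C (tfac (a + s) / (tfac a * tfac s)) : Aq) • e (a + s)) ∈ I := by
        rw [hsmulr, ← smul_sub]
        exact hsmulmem _ _ (hEE a s)
      have hfin : (Polynomial.C (tfac s / p) : Aq) •
            ((Polynomial.C (tfac (a + s) / (tfac a * tfac s)) : Aq) • e (a + s))
          = (Polynomial.C (tfac (a + s) / (tfac a * p)) : Aq) • e (a + s) := by
        have hval : (tfac s / p) * (tfac (a + s) / (tfac a * tfac s))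
            = tfac (a + s) / (tfac a * p) := by
          field_simp [hne a, hne s, hpne]
        rw [smul_smul, ← Polynomial.C_mul, hval]
      have hcomb := I.add_mem h12 h23
      rw [sub_add_sub_cancel, hfin] at hcomb
      simpa [List.foldr_cons, List.sum_cons, List.map_cons, List.prod_cons] using hcomb
  have h := hL (List.ofFn lam)
  rw [List.sum_ofFn, hsum, List.map_ofFn, List.prod_ofFn] at h
  exact h
end
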